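/- arXiv:1609.06274 — 2 statements merged into one kernel-verified Lean document; each statement's English description precedes it below -/
import Mathlib

section
/- Let G be a finite simple graph, let φ : K → R/I be an R-linear map vanishing on K_0, and let ab and bc be distinct adjacent edges of G (a ≠ c). Then there exists a polynomial p ∈ R with p ≡ φ(r_{ab,bc}) (mod I) such that every monomial of p with nonzero coefficient is divisible by x_a or by x_c. -/
open MvPolynomial

noncomputable section

def edgeIdeal (k : Type*) [Field k] {V : Type*} (E : V → V → Prop) :
    Ideal (MvPolynomial V k) :=
  Ideal.span {m | ∃ a b, E a b ∧ m = X a * X b}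

/-- The edge set of the graph, as a set of unordered pairs. -/
def edgeSet {V : Type*} {E : V → V → Prop} (hs : Symmetric E) : Set (Sym2 V) :=
  Sym2.fromRel (r := E) ⟨fun _ _ h => hs h⟩

/-- The edge `{u,v}` as an element of the edge set. -/
def mkEdge {V : Type*} {E : V → V → Prop} (hs : Symmetric E) (u v : V) (h : E u v) :
    edgeSet hs :=
  ⟨s(u, v), Sym2.fromRel_prop.mpr h⟩

/-- The monomial `x_u x_v` associated to the edge `{u,v}`. -/
def edgeMon (k : Type*) [Field k] {V : Type*} {E : V → V → Prop} (hs : Symmetric E)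
    (e : edgeSet hs) : MvPolynomial V k :=
  Sym2.lift ⟨fun a b => X a * X b, fun a b => mul_comm _ _⟩ e.1

/-- The map `j : M → R` from the free module on the edges, `ε_{uv} ↦ x_u x_v`. -/
def jmap (k : Type*) [Field k] {V : Type*} {E : V → V → Prop} (hs : Symmetric E) :
    (edgeSet hs →₀ MvPolynomial V k) →ₗ[MvPolynomial V k] MvPolynomial V k :=
  Finsupp.linearCombination (MvPolynomial V k) (edgeMon k hs)

/-- `K = ker j`, the module of relations between the generators of the edge ideal. -/
def Kmod (k : Type*) [Field k] {V : Type*} {E : V → V → Prop} (hs : Symmetric E) :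
    Submodule (MvPolynomial V k) (edgeSet hs →₀ MvPolynomial V k) :=
  LinearMap.ker (jmap k hs)

/-- `K₀`, the submodule of Koszul relations `j(ε_e)·ε_{e'} − j(ε_{e'})·ε_e`. -/
def K0 (k : Type*) [Field k] {V : Type*} {E : V → V → Prop} (hs : Symmetric E) :
    Submodule (MvPolynomial V k) (edgeSet hs →₀ MvPolynomial V k) :=
  Submodule.span (MvPolynomial V k)
    {z | ∃ e e' : edgeSet hs, e ≠ e' ∧
      z = edgeMon k hs e • Finsupp.single e' (1 : MvPolynomial V k)
        - edgeMon k hs e' • Finsupp.single e (1 : MvPolynomial V k)}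

/-- For adjacent edges `uv` and `vw`, the relation `x_u·ε_{vw} − x_w·ε_{uv}` (equal to
`±r_{uv,vw}`), as an element of `K`. -/
def relK (k : Type*) [Field k] {V : Type*} {E : V → V → Prop} (hs : Symmetric E)
    (u v w : V) (h1 : E u v) (h2 : E v w) : Kmod k hs :=
  ⟨(X u : MvPolynomial V k) • Finsupp.single (mkEdge hs v w h2) (1 : MvPolynomial V k)
      - (X w : MvPolynomial V k) • Finsupp.single (mkEdge hs u v h1) (1 : MvPolynomial V k), by
    simp only [Kmod, LinearMap.mem_ker, jmap]
    simp [Finsupp.smul_single, map_sub, edgeMon, mkEdge, Sym2.lift_mk]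
    ring⟩

/-- `φ : K → R/I` vanishes on the Koszul relations `K₀`. -/
def VanishesOnK0 (k : Type*) [Field k] {V : Type*} {E : V → V → Prop} (hs : Symmetric E)
    (φ : Kmod k hs →ₗ[MvPolynomial V k] MvPolynomial V k ⧸ edgeIdeal k E) : Prop :=
  ∀ z : Kmod k hs, (z : edgeSet hs →₀ MvPolynomial V k) ∈ K0 k hs → φ z = 0

/-- `T²(R/I) = 0`: every `R`-linear map `K → R/I` vanishing on `K₀` is the restriction
to `K` of an `R`-linear map `M → R/I`. -/
def T2Vanishes (k : Type*) [Field k] {V : Type*} {E : V → V → Prop} (hs : Symmetric E) : Prop :=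
  ∀ φ : Kmod k hs →ₗ[MvPolynomial V k] MvPolynomial V k ⧸ edgeIdeal k E,
    VanishesOnK0 k hs φ →
    ∃ ψ : (edgeSet hs →₀ MvPolynomial V k) →ₗ[MvPolynomial V k]
        MvPolynomial V k ⧸ edgeIdeal k E,
      ∀ z : Kmod k hs, φ z = ψ z

/-! ### Auxiliary lemmas -/

lemma edgeIdeal_eq_span_monomial (k : Type*) [Field k] {V : Type*} (E : V → V → Prop) :
    edgeIdeal k E = Ideal.span ((fun s => monomial s (1 : k)) ''
      {s : V →₀ ℕ | ∃ u v, E u v ∧ s = Finsupp.single u 1 + Finsupp.single v 1}) := by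
  unfold edgeIdeal
  congr 1
  ext m
  constructor
  · rintro ⟨u, v, huv, rfl⟩
    exact ⟨_, ⟨u, v, huv, rfl⟩, by rw [X, X, monomial_mul, one_mul]⟩
  · rintro ⟨s, ⟨u, v, huv, rfl⟩, rfl⟩
    exact ⟨u, v, huv, by rw [X, X, monomial_mul, one_mul]⟩

lemma mem_edgeIdeal_iff {k : Type*} [Field k] {V : Type*} {E : V → V → Prop}
    {f : MvPolynomial V k} :
    f ∈ edgeIdeal k E ↔ ∀ d ∈ f.support, ∃ u v, E u v ∧
      Finsupp.single u 1 + Finsupp.single v 1 ≤ d := by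
  rw [edgeIdeal_eq_span_monomial, mem_ideal_span_monomial_image]
  constructor <;> intro h d hd
  · obtain ⟨s, ⟨u, v, huv, rfl⟩, hle⟩ := h d hd
    exact ⟨u, v, huv, hle⟩
  · obtain ⟨u, v, huv, hle⟩ := h d hd
    exact ⟨_, ⟨u, v, huv, rfl⟩, hle⟩

lemma le_cases_aux {V : Type*} [DecidableEq V] {u v w : V} {d : V →₀ ℕ} (huv : u ≠ v)
    (h : Finsupp.single u 1 + Finsupp.single v 1 ≤ Finsupp.single w 1 + d) :
    (Finsupp.single u 1 + Finsupp.single v 1 ≤ d) ∨ (u = w ∧ 1 ≤ d v) ∨ (v = w ∧ 1 ≤ d u) := by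
  by_cases huw : u = w
  · refine Or.inr (Or.inl ⟨huw, ?_⟩)
    have hv := h v
    rw [Finsupp.add_apply, Finsupp.add_apply, Finsupp.single_eq_of_ne' huv,
      Finsupp.single_eq_same, Finsupp.single_eq_of_ne' (huw ▸ huv)] at hv
    omega
  · by_cases hvw : v = w
    · refine Or.inr (Or.inr ⟨hvw, ?_⟩)
      have hu := h u
      rw [Finsupp.add_apply, Finsupp.add_apply, Finsupp.single_eq_same,
        Finsupp.single_eq_of_ne' (Ne.symm huv), Finsupp.single_eq_of_ne' (hvw ▸ Ne.symm huv)] at hu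
      omega
    · left
      intro x
      have hx := h x
      by_cases hwx : w = x
      · subst hwx
        rw [Finsupp.add_apply, Finsupp.single_eq_of_ne' huw, Finsupp.single_eq_of_ne' hvw]
        simp
      · rw [Finsupp.add_apply, Finsupp.add_apply, Finsupp.single_eq_of_ne' hwx] at hx
        rw [Finsupp.add_apply]
        omega

lemma two_le_aux {V : Type*} [DecidableEq V] {x y : V} {d : V →₀ ℕ} (hxy : x ≠ y)
    (hx : 1 ≤ d x) (hy : 1 ≤ d y) :
    Finsupp.single x 1 + Finsupp.single y 1 ≤ d := by
  intro z
  rw [Finsupp.add_apply]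
  by_cases hzx : x = z
  · subst hzx
    rw [Finsupp.single_eq_same, Finsupp.single_eq_of_ne' (Ne.symm hxy)]
    omega
  · rw [Finsupp.single_eq_of_ne' hzx]
    by_cases hzy : y = z
    · subst hzy
      rw [Finsupp.single_eq_same]; omega
    · rw [Finsupp.single_eq_of_ne' hzy]; simp

lemma mkEdge_ne {V : Type*} {E : V → V → Prop} (hs : Symmetric E) (hirr : ∀ v, ¬ E v v)
    {a b c : V} (h1 : E a b) (h2 : E b c) (hac : a ≠ c) :
    mkEdge hs a b h1 ≠ mkEdge hs b c h2 := by
  intro h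
  have : s(a, b) = s(b, c) := congrArg Subtype.val h
  rw [Sym2.eq_iff] at this
  rcases this with ⟨hab, _⟩ | ⟨hac', _⟩
  · exact hirr b (hab ▸ h1)
  · exact hac hac'

lemma xb_smul_mem_K0 {k : Type*} [Field k] {V : Type*} {E : V → V → Prop}
    (hs : Symmetric E) (hirr : ∀ v, ¬ E v v) {a b c : V}
    (h1 : E a b) (h2 : E b c) (hac : a ≠ c) :
    (X b : MvPolynomial V k) • ((relK k hs a b c h1 h2 : Kmod k hs) :
      edgeSet hs →₀ MvPolynomial V k) ∈ K0 k hs := by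
  apply Submodule.subset_span
  refine ⟨mkEdge hs a b h1, mkEdge hs b c h2, mkEdge_ne hs hirr h1 h2 hac, ?_⟩
  show (X b : MvPolynomial V k) • ((X a : MvPolynomial V k) • Finsupp.single (mkEdge hs b c h2) 1
      - (X c : MvPolynomial V k) • Finsupp.single (mkEdge hs a b h1) 1) = _
  rw [smul_sub, smul_smul, smul_smul]
  have e1 : edgeMon k hs (mkEdge hs a b h1) = X a * X b := rfl
  have e2 : edgeMon k hs (mkEdge hs b c h2) = X b * X c := rfl
  rw [e1, e2]
  ring_nf

lemma key_identity {k : Type*} [Field k] {V : Type*} {E : V → V → Prop}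
    (hs : Symmetric E) {a b c v : V}
    (h1 : E a b) (h2 : E b c) (hbv : E b v) :
    (X v : MvPolynomial V k) • (relK k hs a b c h1 h2) =
      (X a : MvPolynomial V k) • relK k hs v b c (hs hbv) h2
      + (X c : MvPolynomial V k) • relK k hs a b v h1 hbv := by
  apply Subtype.ext
  have hvb : mkEdge hs v b (hs hbv) = mkEdge hs b v hbv := by
    apply Subtype.ext
    exact Sym2.eq_swap
  show (X v : MvPolynomial V k) •
      ((X a : MvPolynomial V k) • Finsupp.single (mkEdge hs b c h2) (1 : MvPolynomial V k)
        - (X c : MvPolynomial V k) • Finsupp.single (mkEdge hs a b h1) 1)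
    = (X a : MvPolynomial V k) •
      ((X v : MvPolynomial V k) • Finsupp.single (mkEdge hs b c h2) (1 : MvPolynomial V k)
        - (X c : MvPolynomial V k) • Finsupp.single (mkEdge hs v b (hs hbv)) 1)
    + (X c : MvPolynomial V k) •
      ((X a : MvPolynomial V k) • Finsupp.single (mkEdge hs b v hbv) (1 : MvPolynomial V k)
        - (X v : MvPolynomial V k) • Finsupp.single (mkEdge hs a b h1) 1)
  rw [hvb]
  module

set_option synthInstance.maxHeartbeats 1000000 in
/-- Step 2: if `v` is a neighbour of `b` distinct from `a` and `c`, and `d` is a monomial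
of `q` (a representative of `φ(r)`) with `d a = d c = 0` and `d v ≥ 1`, then some edge
monomial divides `x^d`. -/
lemma step2_aux {k : Type*} [Field k] {V : Type*} [DecidableEq V]
    {E : V → V → Prop} (hs : Symmetric E) (hirr : ∀ v, ¬ E v v)
    (φ : Kmod k hs →ₗ[MvPolynomial V k] MvPolynomial V k ⧸ edgeIdeal k E)
    {a b c : V} (h1 : E a b) (h2 : E b c)
    {q : MvPolynomial V k}
    (hq : Ideal.Quotient.mk (edgeIdeal k E) q = φ (relK k hs a b c h1 h2))
    {v : V} (hbv : E b v) (hva : v ≠ a) (hvc : v ≠ c)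
    {d : V →₀ ℕ} (hd : coeff d q ≠ 0) (hda : d a = 0) (hdc : d c = 0) (hdv : 1 ≤ d v) :
    ∃ u w, E u w ∧ Finsupp.single u 1 + Finsupp.single w 1 ≤ d := by
  obtain ⟨q1, hq1⟩ := Ideal.Quotient.mk_surjective (φ (relK k hs v b c (hs hbv) h2))
  obtain ⟨q2, hq2⟩ := Ideal.Quotient.mk_surjective (φ (relK k hs a b v h1 hbv))
  have h3 : Ideal.Quotient.mk (edgeIdeal k E) (X v * q)
      = Ideal.Quotient.mk (edgeIdeal k E) (X a * q1 + X c * q2) := by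
    have hid := congrArg φ (key_identity hs h1 h2 hbv)
    rw [map_smul, map_add, map_smul, map_smul, ← hq, ← hq1, ← hq2] at hid
    rw [RingHom.map_add (Ideal.Quotient.mk (edgeIdeal k E)) (X a * q1) (X c * q2)]
    exact hid
  have hI : X v * q - (X a * q1 + X c * q2) ∈ edgeIdeal k E := by
    rw [← Ideal.Quotient.eq_zero_iff_mem, map_sub, h3, sub_self]
  have hco : coeff (Finsupp.single v 1 + d) (X v * q - (X a * q1 + X c * q2)) = coeff d q := by
    have hca : coeff (Finsupp.single v 1 + d) (X a * q1) = 0 := by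
      rw [coeff_X_mul', if_neg]
      intro hmem
      rw [Finsupp.mem_support_iff, Finsupp.add_apply,
        Finsupp.single_eq_of_ne' hva, hda] at hmem
      exact hmem rfl
    have hcc : coeff (Finsupp.single v 1 + d) (X c * q2) = 0 := by
      rw [coeff_X_mul', if_neg]
      intro hmem
      rw [Finsupp.mem_support_iff, Finsupp.add_apply,
        Finsupp.single_eq_of_ne' hvc, hdc] at hmem
      exact hmem rfl
    rw [coeff_sub, coeff_add, coeff_X_mul, hca, hcc, add_zero, sub_zero]
  obtain ⟨u, w, huw, hle⟩ := mem_edgeIdeal_iff.mp hI _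
    (mem_support_iff.mpr (by rw [hco]; exact hd))
  have hune : u ≠ w := fun h => hirr u (h ▸ huw)
  rcases le_cases_aux hune hle with h | ⟨huv', hdw⟩ | ⟨hwv', hdu⟩
  · exact ⟨u, w, huw, h⟩
  · subst huv'
    exact ⟨u, w, huw, two_le_aux hune hdv hdw⟩
  · subst hwv'
    exact ⟨u, w, huw, two_le_aux hune hdu hdv⟩

/-- Core combinatorial fact: every monomial of a representative `q` of `φ(r_{ab,bc})`
with zero exponent at `a` and `c` is divisible by an edge monomial. -/
lemma core_aux {k : Type*} [Field k] {V : Type*} [DecidableEq V]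
    {E : V → V → Prop} (hs : Symmetric E) (hirr : ∀ v, ¬ E v v)
    (φ : Kmod k hs →ₗ[MvPolynomial V k] MvPolynomial V k ⧸ edgeIdeal k E)
    (hφ : VanishesOnK0 k hs φ)
    {a b c : V} (h1 : E a b) (h2 : E b c) (hac : a ≠ c)
    {q : MvPolynomial V k}
    (hq : Ideal.Quotient.mk (edgeIdeal k E) q = φ (relK k hs a b c h1 h2))
    {d : V →₀ ℕ} (hd : coeff d q ≠ 0) (hda : d a = 0) (hdc : d c = 0) :
    ∃ u w, E u w ∧ Finsupp.single u 1 + Finsupp.single w 1 ≤ d := by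
  have hb0 : φ ((X b : MvPolynomial V k) • relK k hs a b c h1 h2) = 0 :=
    hφ _ (xb_smul_mem_K0 hs hirr h1 h2 hac)
  rw [map_smul, ← hq] at hb0
  have hbI : (X b : MvPolynomial V k) * q ∈ edgeIdeal k E :=
    Ideal.Quotient.eq_zero_iff_mem.mp hb0
  obtain ⟨u, w, huw, hle⟩ := mem_edgeIdeal_iff.mp hbI _
    (mem_support_iff.mpr (by rw [coeff_X_mul]; exact hd))
  have hune : u ≠ w := fun h => hirr u (h ▸ huw)
  rcases le_cases_aux hune hle with h | ⟨hub, hdw⟩ | ⟨hwb, hdu⟩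
  · exact ⟨u, w, huw, h⟩
  · subst hub
    have hwa : w ≠ a := fun h => by rw [h, hda] at hdw; omega
    have hwc : w ≠ c := fun h => by rw [h, hdc] at hdw; omega
    exact step2_aux hs hirr φ h1 h2 hq huw hwa hwc hd hda hdc hdw
  · subst hwb
    have hua : u ≠ a := fun h => by rw [h, hda] at hdu; omega
    have huc : u ≠ c := fun h => by rw [h, hdc] at hdu; omega
    exact step2_aux hs hirr φ h1 h2 hq (hs huw) hua huc hd hda hdc hdu

/-- Let `G` be a finite simple graph, `φ : K → R/I` an `R`-linear map
vanishing on `K₀`, and `ab`, `bc` distinct adjacent edges (`a ≠ c`).  Then there is a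
polynomial `p ≡ φ(r_{ab,bc}) (mod I)` each of whose monomials is divisible by `x_a` or by
`x_c`.  (Here `relK a b c = x_a·ε_{bc} − x_c·ε_{ab} = ±r_{ab,bc}`; the conclusion is
invariant under this sign.) -/
theorem statement14 {k : Type*} [Field k] {V : Type*} [DecidableEq V]
    {E : V → V → Prop} (hs : Symmetric E) (hirr : ∀ v, ¬ E v v)
    (φ : Kmod k hs →ₗ[MvPolynomial V k] MvPolynomial V k ⧸ edgeIdeal k E)
    (hφ : VanishesOnK0 k hs φ)
    (a b c : V) (h1 : E a b) (h2 : E b c) (hac : a ≠ c) :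
    ∃ p : MvPolynomial V k,
      Ideal.Quotient.mk (edgeIdeal k E) p = φ (relK k hs a b c h1 h2) ∧
      ∀ d ∈ p.support, d a ≠ 0 ∨ d c ≠ 0 := by
  classical
  obtain ⟨q, hq⟩ := Ideal.Quotient.mk_surjective (φ (relK k hs a b c h1 h2))
  set P : (V →₀ ℕ) → Prop := fun d => d a ≠ 0 ∨ d c ≠ 0 with hP
  set p : MvPolynomial V k :=
    ∑ d ∈ q.support.filter P, monomial d (coeff d q) with hpdef
  have hcoeff : ∀ e, coeff e p = if e ∈ q.support.filter P then coeff e q else 0 := by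
    intro e
    rw [hpdef, coeff_sum]
    rw [Finset.sum_congr rfl (fun d _ => coeff_monomial e d (coeff d q))]
    exact Finset.sum_ite_eq' _ _ _
  refine ⟨p, ?_, ?_⟩
  · rw [← hq]
    rw [Ideal.Quotient.eq]
    apply mem_edgeIdeal_iff.mpr
    intro d hd
    rw [mem_support_iff, coeff_sub, hcoeff d] at hd
    by_cases hmem : d ∈ q.support.filter P
    · rw [if_pos hmem, sub_self] at hd
      exact absurd rfl hd
    · rw [if_neg hmem, zero_sub, neg_ne_zero] at hd
      rw [Finset.mem_filter, mem_support_iff] at hmem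
      push_neg at hmem
      have hnP : ¬ P d := hmem hd
      have hda : d a = 0 := by by_contra h; exact hnP (Or.inl h)
      have hdc : d c = 0 := by by_contra h; exact hnP (Or.inr h)
      exact core_aux hs hirr φ hφ h1 h2 hac hq hd hda hdc
  · intro d hd
    rw [mem_support_iff, hcoeff d] at hd
    by_cases hmem : d ∈ q.support.filter P
    · exact (Finset.mem_filter.mp hmem).2
    · rw [if_neg hmem] at hd
      exact absurd rfl hd

end
end

section
/- Let n ≥ 3 and let C_n be the cycle graph on n vertices with edge ideal I = I(C_n) ⊆ R = k[x_0, …, x_{n−1}]. Then T^2(R/I) = 0 — every R-linear map K → R/I vanishing on K_0 is the restriction to K of an R-linear map M → R/I — if and only if n ≠ 4; that is, C_4 is the only cycle with non-vanishing second cotangent cohomology. -/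
open MvPolynomial

noncomputable section

section Syzygy

variable {k : Type*} [Field k] {V : Type*} {ι : Type*}

def syzMeasure (p : ι →₀ MvPolynomial V k) : ℕ :=
  p.sum fun _ r => r.support.card

theorem syzMeasure_eq (p : ι →₀ MvPolynomial V k) (s : Finset ι) (hs : p.support ⊆ s) :
    syzMeasure p = ∑ i ∈ s, (p i).support.card := by
  rw [syzMeasure, Finsupp.sum]
  exact Finset.sum_subset hs (fun i _ hi => by
    simp [Finsupp.notMem_support_iff.mp hi])

def syzSet (dd : ι → (V →₀ ℕ)) : Set (ι →₀ MvPolynomial V k) :=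
  {z | ∃ (i j : ι) (u : V →₀ ℕ), i ≠ j ∧ dd i ≤ u ∧ dd j ≤ u ∧
        z = (monomial (u - dd i) (1:k) : MvPolynomial V k) • Finsupp.single i (1 : MvPolynomial V k)
          - (monomial (u - dd j) (1:k) : MvPolynomial V k) • Finsupp.single j (1 : MvPolynomial V k)}

theorem syzygy_thm (dd : ι → (V →₀ ℕ)) (p : ι →₀ MvPolynomial V k)
    (hp : Finsupp.linearCombination (MvPolynomial V k)
      (fun i => (monomial (dd i) (1:k) : MvPolynomial V k)) p = 0) :
    p ∈ Submodule.span (MvPolynomial V k) (syzSet dd) := by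
  classical
  suffices H : ∀ N (p : ι →₀ MvPolynomial V k), syzMeasure p = N →
      Finsupp.linearCombination (MvPolynomial V k)
        (fun i => (monomial (dd i) (1:k) : MvPolynomial V k)) p = 0 →
      p ∈ Submodule.span (MvPolynomial V k) (syzSet dd) from H _ p rfl hp
  intro N
  induction N using Nat.strong_induction_on with
  | _ N ih =>
  intro p hN hlc
  by_cases hp0 : p = 0
  · simp [hp0]
  -- pick i0 and e
  obtain ⟨i0, hi0⟩ := Finsupp.ne_iff.mp hp0
  simp only [Finsupp.coe_zero, Pi.zero_apply] at hi0
  obtain ⟨e, he⟩ : ∃ e, e ∈ (p i0).support := by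
    by_contra h
    push_neg at h
    exact hi0 (MvPolynomial.support_eq_empty.mp (Finset.eq_empty_iff_forall_notMem.mpr h))
  set d : V →₀ ℕ := e + dd i0 with hd
  have hdi0 : dd i0 ≤ d := le_add_self
  have hde : d - dd i0 = e := add_tsub_cancel_right e (dd i0)
  set c : k := coeff e (p i0) with hcdef
  have hc : c ≠ 0 := MvPolynomial.mem_support_iff.mp he
  -- the coefficient sum identity
  have hsum : ∑ i ∈ p.support, (if dd i ≤ d then coeff (d - dd i) (p i) else 0) = 0 := by
    have h0 : coeff d (Finsupp.linearCombination (MvPolynomial V k)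
        (fun i => (monomial (dd i) (1:k) : MvPolynomial V k)) p) = 0 := by
      rw [hlc]; simp
    rw [Finsupp.linearCombination_apply, Finsupp.sum] at h0
    rw [coeff_sum] at h0
    refine Eq.trans ?_ h0
    apply Finset.sum_congr rfl
    intro i _
    simp [smul_eq_mul, coeff_mul_monomial']
  -- find j
  have hi0mem : i0 ∈ p.support := Finsupp.mem_support_iff.mpr hi0
  have hj : ∃ j ∈ p.support, j ≠ i0 ∧ dd j ≤ d ∧ coeff (d - dd j) (p j) ≠ 0 := by
    by_contra h
    push_neg at h
    have : ∑ i ∈ p.support, (if dd i ≤ d then coeff (d - dd i) (p i) else 0)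
        = (if dd i0 ≤ d then coeff (d - dd i0) (p i0) else 0) := by
      apply Finset.sum_eq_single_of_mem i0 hi0mem
      intro b hb hbne
      rcases Classical.em (dd b ≤ d) with hb' | hb'
      · simp [hb', h b hb hbne hb']
      · simp [hb']
    rw [this, if_pos hdi0, hde] at hsum
    exact hc hsum
  obtain ⟨j, hjmem, hji0, hddj, hcj⟩ := hj
  -- the syzygy generator
  set g : ι →₀ MvPolynomial V k :=
    (monomial (d - dd i0) (1:k) : MvPolynomial V k) • Finsupp.single i0 (1 : MvPolynomial V k)
      - (monomial (d - dd j) (1:k) : MvPolynomial V k) • Finsupp.single j (1 : MvPolynomial V k)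
    with hg
  have hgS : g ∈ syzSet (k := k) dd := ⟨i0, j, d, hji0.symm, hdi0, hddj, rfl⟩
  set q : ι →₀ MvPolynomial V k := p - (C c : MvPolynomial V k) • g with hq
  have hpq : p = q + (C c : MvPolynomial V k) • g := by rw [hq]; abel
  -- linear combination of q is zero
  have hlcq : Finsupp.linearCombination (MvPolynomial V k)
      (fun i => (monomial (dd i) (1:k) : MvPolynomial V k)) q = 0 := by
    rw [hq, map_sub, map_smul, hlc]
    have hg0 : Finsupp.linearCombination (MvPolynomial V k)
        (fun i => (monomial (dd i) (1:k) : MvPolynomial V k)) g = 0 := by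
      rw [hg, map_sub, map_smul, map_smul, Finsupp.linearCombination_single,
        Finsupp.linearCombination_single]
      simp [monomial_mul, tsub_add_cancel_of_le hdi0, tsub_add_cancel_of_le hddj]
    rw [hg0]
    simp
  -- components of q
  have hgi0 : g i0 = (monomial (d - dd i0) (1:k) : MvPolynomial V k) := by
    rw [hg]
    simp [Finsupp.single_apply, hji0]
  have hgj : g j = -(monomial (d - dd j) (1:k) : MvPolynomial V k) := by
    rw [hg]
    simp [Finsupp.single_apply, Ne.symm hji0]
  have hqi0 : q i0 = p i0 - (monomial (d - dd i0) c : MvPolynomial V k) := by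
    rw [hq, Finsupp.sub_apply, Finsupp.smul_apply, hgi0, smul_eq_mul, C_mul_monomial, mul_one]
  have hqj : q j = p j + (monomial (d - dd j) c : MvPolynomial V k) := by
    rw [hq, Finsupp.sub_apply, Finsupp.smul_apply, hgj, smul_eq_mul, mul_neg, C_mul_monomial,
      mul_one, sub_neg_eq_add]
  have hqother : ∀ i, i ≠ i0 → i ≠ j → q i = p i := by
    intro i h1 h2
    rw [hq, Finsupp.sub_apply, Finsupp.smul_apply, hg]
    simp [Finsupp.single_apply, Ne.symm h1, Ne.symm h2]
  -- support facts
  have hsuppi0 : (q i0).support = (p i0).support.erase e := by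
    ext d'
    simp only [MvPolynomial.mem_support_iff, Finset.mem_erase, hqi0, coeff_sub, coeff_monomial,
      hde]
    rcases Classical.em (e = d') with h | h
    · subst h; simp [← hcdef]
    · simp [h, Ne.symm h]
  have hsuppj : (q j).support ⊆ (p j).support := by
    intro d' hd'
    simp only [MvPolynomial.mem_support_iff, hqj, coeff_add, coeff_monomial] at hd' ⊢
    rcases Classical.em (d - dd j = d') with h | h
    · subst h; exact MvPolynomial.mem_support_iff.mp (MvPolynomial.mem_support_iff.mpr hcj)
    · simpa [h] using hd'
  -- measure decreases
  have hmeas : syzMeasure q < syzMeasure p := by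
    set s : Finset ι := p.support ∪ q.support with hsdef
    rw [syzMeasure_eq p s Finset.subset_union_left, syzMeasure_eq q s Finset.subset_union_right]
    apply Finset.sum_lt_sum
    · intro i hi
      rcases Classical.em (i = i0) with h | h
      · subst h; rw [hsuppi0]; exact Finset.card_le_card (Finset.erase_subset _ _)
      rcases Classical.em (i = j) with h' | h'
      · subst h'; exact Finset.card_le_card hsuppj
      · rw [hqother i h h']
    · refine ⟨i0, Finset.mem_union_left _ hi0mem, ?_⟩
      rw [hsuppi0]
      exact Finset.card_erase_lt_of_mem he
  have hqmem : q ∈ Submodule.span (MvPolynomial V k) (syzSet dd) :=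
    ih (syzMeasure q) (hN ▸ hmeas) q rfl hlcq
  rw [hpq]
  exact Submodule.add_mem _ hqmem (Submodule.smul_mem _ _ (Submodule.subset_span hgS))


end Syzygy

section Cycle

variable {k : Type*} [Field k] {n : ℕ}

/-- The cycle relation. -/
abbrev cycRel (n : ℕ) : ZMod n → ZMod n → Prop := fun i j => j = i + 1 ∨ i = j + 1

variable (hn : 3 ≤ n) (hs : Symmetric (fun i j : ZMod n => j = i + 1 ∨ i = j + 1))

local notation "RR" => MvPolynomial (ZMod n) k
local notation "II" => edgeIdeal k (fun i j : ZMod n => j = i + 1 ∨ i = j + 1)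
local notation "QQ" => Ideal.Quotient.mk (edgeIdeal k (fun i j : ZMod n => j = i + 1 ∨ i = j + 1))

theorem zmod_nat_ne (hn : 3 ≤ n) {m : ℕ} (h1 : 0 < m) (h2 : n ≠ m ∧ (n = 3 → m ≠ 3)) :
    True := trivial

theorem zmod_one_ne (hn : 3 ≤ n) : (1 : ZMod n) ≠ 0 := by
  have h : ((1:ℕ) : ZMod n) ≠ 0 := by
    rw [Ne, ZMod.natCast_eq_zero_iff]
    intro h; have := Nat.le_of_dvd one_pos h; omega
  simpa using h

theorem zmod_two_ne (hn : 3 ≤ n) : (2 : ZMod n) ≠ 0 := by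
  have h : ((2:ℕ) : ZMod n) ≠ 0 := by
    rw [Ne, ZMod.natCast_eq_zero_iff]
    intro h; have := Nat.le_of_dvd two_pos h; omega
  simpa using h

theorem zmod_four_ne (hn : 3 ≤ n) (h4 : n ≠ 4) : (4 : ZMod n) ≠ 0 := by
  have h : ((4:ℕ) : ZMod n) ≠ 0 := by
    rw [Ne, ZMod.natCast_eq_zero_iff]
    intro h
    have h5 := Nat.le_of_dvd (by norm_num) h
    have : n = 3 ∨ n = 4 := by omega
    rcases this with h3 | h3
    · rw [h3] at h; norm_num at h
    · exact h4 h3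
  simpa using h

theorem zmod_ne_add (i c : ZMod n) (hc : c ≠ 0) : i ≠ i + c := by
  intro h
  exact hc (left_eq_add.mp h)


theorem X_mul_X_eq_monomial {V : Type*} (a b : V) :
    (X a : MvPolynomial V k) * X b
      = monomial (Finsupp.single a 1 + Finsupp.single b 1) (1:k) := by
  rw [X, X, monomial_mul, one_mul]

def cedge (i : ZMod n) : edgeSet hs := mkEdge hs i (i+1) (Or.inl rfl)

theorem cedge_val (i : ZMod n) : (cedge hs i).1 = s(i, i+1) := rfl

theorem cedge_inj (hn : 3 ≤ n) {i j : ZMod n} (h : cedge hs i = cedge hs j) : i = j := by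
  have h' : s(i, i+1) = s(j, j+1) := congrArg Subtype.val h
  rcases Sym2.eq_iff.mp h' with ⟨h1, _⟩ | ⟨h1, h2⟩
  · exact h1
  · exfalso
    apply zmod_ne_add j 2 (zmod_two_ne hn)
    calc j = i + 1 := h2.symm
    _ = (j+1)+1 := by rw [h1]
    _ = j + 2 := by ring

theorem cedge_surj (e : edgeSet hs) : ∃ i, e = cedge hs i := by
  obtain ⟨q, hq⟩ := e
  induction q using Sym2.ind with
  | _ a b =>
    rcases (Sym2.fromRel_prop.mp (show s(a, b) ∈ Sym2.fromRel _ from hq)) with h | h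
    · exact ⟨a, Subtype.ext (by rw [cedge_val, ← h])⟩
    · exact ⟨b, Subtype.ext (by rw [cedge_val, ← h]; exact Sym2.eq_swap)⟩

def idx (e : edgeSet hs) : ZMod n := (cedge_surj hs e).choose

theorem idx_spec (e : edgeSet hs) : e = cedge hs (idx hs e) := (cedge_surj hs e).choose_spec

theorem idx_cedge (hn : 3 ≤ n) (i : ZMod n) : idx hs (cedge hs i) = i :=
  cedge_inj hs hn (idx_spec hs (cedge hs i)).symm

theorem edgeMon_cedge (i : ZMod n) :
    edgeMon k hs (cedge hs i) = X i * X (i+1) := rfl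

def expo (e : edgeSet hs) : ZMod n →₀ ℕ :=
  Finsupp.single (idx hs e) 1 + Finsupp.single (idx hs e + 1) 1

theorem edgeMon_eq_monomial (e : edgeSet hs) :
    edgeMon k hs e = monomial (expo hs e) (1:k) := by
  conv_lhs => rw [idx_spec hs e]
  rw [edgeMon_cedge, X_mul_X_eq_monomial]
  rfl

theorem edgeMon_mem (e : edgeSet hs) :
    edgeMon k hs e ∈ edgeIdeal k (fun i j : ZMod n => j = i + 1 ∨ i = j + 1) := by
  rw [idx_spec hs e, edgeMon_cedge]
  exact Ideal.subset_span ⟨idx hs e, idx hs e + 1, Or.inl rfl, rfl⟩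

def cycD (n : ℕ) : Set (ZMod n →₀ ℕ) :=
  {d | ∃ i : ZMod n, d = Finsupp.single i 1 + Finsupp.single (i+1) 1}

theorem edgeIdeal_eq_monomialSpan :
    edgeIdeal k (fun i j : ZMod n => j = i + 1 ∨ i = j + 1)
      = Ideal.span ((fun s => monomial s (1:k)) '' cycD n) := by
  unfold edgeIdeal
  congr 1
  ext m
  constructor
  · rintro ⟨a, b, hab, rfl⟩
    rcases hab with h | h
    · exact ⟨_, ⟨a, rfl⟩, by rw [X_mul_X_eq_monomial, h]⟩
    · exact ⟨_, ⟨b, rfl⟩, by simp [X_mul_X_eq_monomial, h, add_comm]⟩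
  · rintro ⟨d, ⟨i, rfl⟩, rfl⟩
    exact ⟨i, i+1, Or.inl rfl, by rw [X_mul_X_eq_monomial]⟩



theorem colon_lemma (f : ZMod n →₀ ℕ) (H : Set (ZMod n))
    (hyp : ∀ (i : ZMod n) (d : ZMod n →₀ ℕ),
      Finsupp.single i 1 + Finsupp.single (i+1) 1 ≤ d + f →
      (Finsupp.single i 1 + Finsupp.single (i+1) 1 ≤ d) ∨ ∃ v ∈ H, Finsupp.single v 1 ≤ d)
    (A : MvPolynomial (ZMod n) k)
    (hA : monomial f (1:k) * A ∈ edgeIdeal k (fun i j : ZMod n => j = i + 1 ∨ i = j + 1)) :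
    A ∈ edgeIdeal k (fun i j : ZMod n => j = i + 1 ∨ i = j + 1)
        ⊔ Ideal.span ((fun v => (X v : MvPolynomial (ZMod n) k)) '' H) := by
  have hA' : ∀ d ∈ A.support,
      ∃ s ∈ cycD n ∪ (fun v => Finsupp.single v 1) '' H, s ≤ d := by
    intro d hd
    have hdf : d + f ∈ (monomial f (1:k) * A).support := by
      rw [MvPolynomial.mem_support_iff, coeff_monomial_mul', if_pos le_add_self,
        add_tsub_cancel_right, one_mul]
      exact MvPolynomial.mem_support_iff.mp hd
    rw [edgeIdeal_eq_monomialSpan] at hA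
    obtain ⟨si, hsi, hle⟩ := mem_ideal_span_monomial_image.mp hA (d+f) hdf
    obtain ⟨i, rfl⟩ := hsi
    rcases hyp i d hle with h | ⟨v, hv, hle'⟩
    · exact ⟨_, Or.inl ⟨i, rfl⟩, h⟩
    · exact ⟨_, Or.inr ⟨v, hv, rfl⟩, hle'⟩
  have hmem : A ∈ Ideal.span ((fun s => monomial s (1:k)) ''
      (cycD n ∪ (fun v => Finsupp.single v 1) '' H)) :=
    mem_ideal_span_monomial_image.mpr hA'
  refine Ideal.span_le.mpr ?_ hmem
  rintro m ⟨sexp, hsd, rfl⟩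
  rcases hsd with ⟨i, rfl⟩ | ⟨v, hv, rfl⟩
  · apply Ideal.mem_sup_left
    rw [edgeIdeal_eq_monomialSpan]
    exact Ideal.subset_span ⟨_, ⟨i, rfl⟩, rfl⟩
  · exact Ideal.mem_sup_right (Ideal.subset_span ⟨v, hv, rfl⟩)

theorem pairval (a b v : ZMod n) :
    ((Finsupp.single a (1:ℕ) + Finsupp.single b (1:ℕ)) : ZMod n →₀ ℕ) v
      = (if a = v then 1 else 0) + (if b = v then 1 else 0) := by
  simp [Finsupp.single_apply]

theorem pair_le_of (a b : ZMod n) (hab : a ≠ b) (d : ZMod n →₀ ℕ)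
    (h1 : 1 ≤ d a) (h2 : 1 ≤ d b) :
    Finsupp.single a (1:ℕ) + Finsupp.single b (1:ℕ) ≤ d := by
  rw [Finsupp.le_def]
  intro v
  rw [pairval]
  rcases eq_or_ne a v with rfl | ha
  · have : ¬ b = a := fun h => hab h.symm
    simp [this]; omega
  · rcases eq_or_ne b v with rfl | hb
    · simp [ha]; omega
    · simp [ha, hb]

theorem colon_A (hn : 3 ≤ n) (i : ZMod n) (A : MvPolynomial (ZMod n) k)
    (hA : (X (i+1) : MvPolynomial (ZMod n) k) * A
      ∈ edgeIdeal k (fun i j : ZMod n => j = i + 1 ∨ i = j + 1)) :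
    A ∈ edgeIdeal k (fun i j : ZMod n => j = i + 1 ∨ i = j + 1)
        ⊔ Ideal.span ((fun v => (X v : MvPolynomial (ZMod n) k)) '' {i, i+2}) := by
  apply colon_lemma (f := Finsupp.single (i+1) 1)
  · intro j d hle
    have h := Finsupp.le_def.mp hle
    have hne : j ≠ j + 1 := zmod_ne_add j 1 (zmod_one_ne hn)
    by_cases hsj : j = i + 1
    · right
      refine ⟨j + 1, ?_, ?_⟩
      · simp only [Set.mem_insert_iff, Set.mem_singleton_iff]
        right; rw [hsj]; ring
      · rw [Finsupp.single_le_iff]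
        have hj := h (j+1)
        have hne2 : ¬ (i + 1 = j + 1) := by rw [← hsj]; exact hne
        rw [pairval, Finsupp.add_apply, Finsupp.single_apply] at hj
        simp [Ne.symm hne, hne2] at hj
        omega
    · by_cases hsj1 : j + 1 = i + 1
      · have hji : j = i := add_right_cancel hsj1
        right
        refine ⟨j, Or.inl hji, ?_⟩
        rw [Finsupp.single_le_iff]
        have hj := h j
        have hne3 : ¬ (i + 1 = j) := by
          rw [hji]; exact Ne.symm (zmod_ne_add i 1 (zmod_one_ne hn))
        rw [pairval, Finsupp.add_apply, Finsupp.single_apply] at hj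
        simp [hne, hne3] at hj
        omega
      · left
        apply pair_le_of _ _ hne
        · have hj := h j
          have hne3 : ¬ (i + 1 = j) := fun hh => hsj hh.symm
          rw [pairval, Finsupp.add_apply, Finsupp.single_apply] at hj
          simp [hne, hne3] at hj
          omega
        · have hj := h (j+1)
          have hne3 : ¬ (i + 1 = j + 1) := fun hh => hsj1 hh.symm
          rw [pairval, Finsupp.add_apply, Finsupp.single_apply] at hj
          simp [Ne.symm hne, hne3] at hj
          omega
  · exact hA

theorem colon_B (hn : 3 ≤ n) (sv tv : ZMod n) (hst1 : tv ≠ sv + 1) (hst2 : sv ≠ tv + 1)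
    (A : MvPolynomial (ZMod n) k)
    (hA : (X sv : MvPolynomial (ZMod n) k) * X tv * A
      ∈ edgeIdeal k (fun i j : ZMod n => j = i + 1 ∨ i = j + 1)) :
    A ∈ edgeIdeal k (fun i j : ZMod n => j = i + 1 ∨ i = j + 1)
        ⊔ Ideal.span ((fun v => (X v : MvPolynomial (ZMod n) k))
            '' {sv+1, sv-1, tv+1, tv-1}) := by
  apply colon_lemma (f := Finsupp.single sv 1 + Finsupp.single tv 1)
  · intro j d hle
    have h := Finsupp.le_def.mp hle
    have hne : j ≠ j + 1 := zmod_ne_add j 1 (zmod_one_ne hn)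
    by_cases hsj : sv = j
    · -- use coordinate j+1, v = sv + 1
      right
      refine ⟨sv + 1, by simp, ?_⟩
      rw [Finsupp.single_le_iff]
      have hj := h (j+1)
      have h1 : ¬ (sv = j + 1) := by rw [hsj]; exact hne
      have h2 : ¬ (tv = j + 1) := by
        intro hh; exact hst1 (by rw [hh, hsj])
      rw [pairval, Finsupp.add_apply, pairval] at hj
      simp [Ne.symm hne, h1, h2] at hj
      rw [hsj]
      omega
    · by_cases hsj1 : sv = j + 1
      · -- use coordinate j, v = sv - 1 = j
        right
        refine ⟨sv - 1, by simp, ?_⟩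
        rw [Finsupp.single_le_iff]
        have hj := h j
        have h2 : ¬ (tv = j) := by
          intro hh; exact hst2 (by rw [hsj1, hh])
        rw [pairval, Finsupp.add_apply, pairval] at hj
        simp [hne, hsj, h2] at hj
        have hsub : sv - 1 = j := by rw [hsj1]; ring
        rw [hsub]
        omega
      · by_cases htj : tv = j
        · -- coordinate j+1, v = tv + 1
          right
          refine ⟨tv + 1, by simp, ?_⟩
          rw [Finsupp.single_le_iff]
          have hj := h (j+1)
          have h2 : ¬ (tv = j + 1) := by rw [htj]; exact hne
          rw [pairval, Finsupp.add_apply, pairval] at hj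
          simp [Ne.symm hne, hsj1, h2] at hj
          rw [htj]
          omega
        · by_cases htj1 : tv = j + 1
          · -- coordinate j, v = tv - 1 = j
            right
            refine ⟨tv - 1, by simp, ?_⟩
            rw [Finsupp.single_le_iff]
            have hj := h j
            rw [pairval, Finsupp.add_apply, pairval] at hj
            simp [hne, hsj, htj] at hj
            have hsub : tv - 1 = j := by rw [htj1]; ring
            rw [hsub]
            omega
          · left
            apply pair_le_of _ _ hne
            · have hj := h j
              rw [pairval, Finsupp.add_apply, pairval] at hj
              simp [hne, hsj, htj] at hj
              omega
            · have hj := h (j+1)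
              rw [pairval, Finsupp.add_apply, pairval] at hj
              simp [Ne.symm hne, hsj1, htj1] at hj
              omega
  · rw [← X_mul_X_eq_monomial]; exact hA


theorem expo_cedge (hn : 3 ≤ n) (i : ZMod n) :
    expo hs (cedge hs i) = Finsupp.single i 1 + Finsupp.single (i+1) 1 := by
  rw [expo, idx_cedge hs hn]

theorem pair_le_elim {a b : ZMod n} {u : ZMod n →₀ ℕ}
    (h : Finsupp.single a (1:ℕ) + Finsupp.single b 1 ≤ u) : 1 ≤ u a ∧ 1 ≤ u b := by
  have ha := Finsupp.le_def.mp h a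
  have hb := Finsupp.le_def.mp h b
  rw [pairval] at ha hb
  constructor
  · rcases eq_or_ne a a with _ | h'
    · simp at ha; omega
    · exact absurd rfl h'
  · rcases eq_or_ne b b with _ | h'
    · simp at hb; omega
    · exact absurd rfl h'

theorem triple_le_of (a b c : ZMod n) (hab : a ≠ b) (hac : a ≠ c) (hbc : b ≠ c)
    (u : ZMod n →₀ ℕ) (h1 : 1 ≤ u a) (h2 : 1 ≤ u b) (h3 : 1 ≤ u c) :
    Finsupp.single a (1:ℕ) + Finsupp.single b 1 + Finsupp.single c 1 ≤ u := by
  rw [Finsupp.le_def]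
  intro v
  rw [Finsupp.add_apply, pairval, Finsupp.single_apply]
  rcases eq_or_ne a v with rfl | ha
  · simp [Ne.symm hab, Ne.symm hac]; omega
  · rcases eq_or_ne b v with rfl | hb
    · simp [ha, Ne.symm hbc]; omega
    · rcases eq_or_ne c v with rfl | hc
      · simp [ha, hb]; omega
      · simp [ha, hb, hc]

theorem quad_le_of (a b c e : ZMod n) (hab : a ≠ b) (hac : a ≠ c) (hae : a ≠ e)
    (hbc : b ≠ c) (hbe : b ≠ e) (hce : c ≠ e)
    (u : ZMod n →₀ ℕ) (h1 : 1 ≤ u a) (h2 : 1 ≤ u b) (h3 : 1 ≤ u c) (h4 : 1 ≤ u e) :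
    (Finsupp.single a (1:ℕ) + Finsupp.single b 1)
      + (Finsupp.single c (1:ℕ) + Finsupp.single e 1) ≤ u := by
  rw [Finsupp.le_def]
  intro v
  rw [Finsupp.add_apply, pairval, pairval]
  rcases eq_or_ne a v with rfl | ha
  · simp [Ne.symm hab, Ne.symm hac, Ne.symm hae]; omega
  · rcases eq_or_ne b v with rfl | hb
    · simp [ha, Ne.symm hbc, Ne.symm hbe]; omega
    · rcases eq_or_ne c v with rfl | hc
      · simp [ha, hb, Ne.symm hce]; omega
      · rcases eq_or_ne e v with rfl | he
        · simp [ha, hb, hc]; omega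
        · simp [ha, hb, hc, he]

/-- Set of values of `relK`. -/
def relKset : Set (edgeSet hs →₀ MvPolynomial (ZMod n) k) :=
  {z | ∃ u v w h1 h2, z = (relK k hs u v w h1 h2).1}

/-- Set of Koszul generators, as in `K0`. -/
def K0set : Set (edgeSet hs →₀ MvPolynomial (ZMod n) k) :=
  {z | ∃ e e' : edgeSet hs, e ≠ e' ∧
      z = edgeMon k hs e • Finsupp.single e' (1 : MvPolynomial (ZMod n) k)
        - edgeMon k hs e' • Finsupp.single e (1 : MvPolynomial (ZMod n) k)}

def sigmaK (i : ZMod n) : Kmod k hs := relK k hs i (i+1) (i+1+1) (Or.inl rfl) (Or.inl rfl)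

theorem sigmaK_val (i : ZMod n) :
    ((sigmaK (k := k) hs i : Kmod k hs) : edgeSet hs →₀ MvPolynomial (ZMod n) k)
      = (X i : MvPolynomial (ZMod n) k) • Finsupp.single (cedge hs (i+1)) 1
        - (X (i+1+1) : MvPolynomial (ZMod n) k) • Finsupp.single (cedge hs i) 1 := rfl

theorem monomial_mul_X (w : ZMod n →₀ ℕ) (c : ZMod n) :
    (monomial w (1:k) : MvPolynomial (ZMod n) k) * X c = monomial (w + Finsupp.single c 1) 1 := by
  rw [X, monomial_mul, mul_one]

theorem tsub_split (u x y : ZMod n →₀ ℕ) (h : x + y ≤ u) : u - x = (u - (x + y)) + y := by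
  apply add_right_cancel (b := x)
  rw [tsub_add_cancel_of_le (le_trans le_self_add h)]
  rw [add_assoc, add_comm y x, tsub_add_cancel_of_le h]

theorem consec_mem (hn : 3 ≤ n) (a : ZMod n) (u : ZMod n →₀ ℕ)
    (h1 : expo hs (cedge hs a) ≤ u) (h2 : expo hs (cedge hs (a+1)) ≤ u) :
    (monomial (u - expo hs (cedge hs a)) (1:k)) •
        Finsupp.single (cedge hs a) (1 : MvPolynomial (ZMod n) k)
      - (monomial (u - expo hs (cedge hs (a+1))) (1:k)) •
        Finsupp.single (cedge hs (a+1)) (1 : MvPolynomial (ZMod n) k)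
      ∈ Submodule.span (MvPolynomial (ZMod n) k) (K0set hs ∪ relKset hs) := by
  rw [expo_cedge hs hn] at h1 h2 ⊢
  rw [expo_cedge hs hn]
  obtain ⟨hua, hua1⟩ := pair_le_elim h1
  obtain ⟨_, hua2⟩ := pair_le_elim h2
  have hne1 : a ≠ a + 1 := zmod_ne_add a 1 (zmod_one_ne hn)
  have hne2 : a ≠ a + 1 + 1 := fun h =>
    zmod_ne_add a 2 (zmod_two_ne hn) (h.trans (by ring))
  have hne3 : a + 1 ≠ a + 1 + 1 := zmod_ne_add (a+1) 1 (zmod_one_ne hn)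
  have htle : Finsupp.single a (1:ℕ) + Finsupp.single (a+1) 1 + Finsupp.single (a+1+1) 1 ≤ u :=
    triple_le_of a (a+1) (a+1+1) hne1 hne2 hne3 u hua hua1 hua2
  set w : ZMod n →₀ ℕ := u - (Finsupp.single a (1:ℕ) + Finsupp.single (a+1) 1
      + Finsupp.single (a+1+1) 1) with hw
  have key1 : u - (Finsupp.single a (1:ℕ) + Finsupp.single (a+1) 1)
      = w + Finsupp.single (a+1+1) 1 :=
    tsub_split u _ _ htle
  have hcomm : Finsupp.single (a+1) (1:ℕ) + Finsupp.single (a+1+1) 1 + Finsupp.single a 1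
      = Finsupp.single a 1 + Finsupp.single (a+1) 1 + Finsupp.single (a+1+1) 1 := by abel
  have key2 : u - (Finsupp.single (a+1) (1:ℕ) + Finsupp.single (a+1+1) 1)
      = w + Finsupp.single a 1 := by
    have h' : Finsupp.single (a+1) (1:ℕ) + Finsupp.single (a+1+1) 1 + Finsupp.single a 1 ≤ u := by
      rw [hcomm]; exact htle
    have := tsub_split u (Finsupp.single (a+1) (1:ℕ) + Finsupp.single (a+1+1) 1)
      (Finsupp.single a 1) h'
    rw [hcomm] at this
    exact this
  rw [key1, key2]
  have e1 : (monomial (w + Finsupp.single (a+1+1) 1) (1:k) : MvPolynomial (ZMod n) k)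
      = monomial w 1 * X (a+1+1) := (monomial_mul_X w (a+1+1)).symm
  have e2 : (monomial (w + Finsupp.single a 1) (1:k) : MvPolynomial (ZMod n) k)
      = monomial w 1 * X a := (monomial_mul_X w a).symm
  rw [e1, e2, mul_smul, mul_smul, ← smul_sub]
  apply Submodule.smul_mem
  have heq : (X (a+1+1) : MvPolynomial (ZMod n) k) • Finsupp.single (cedge hs a)
        (1 : MvPolynomial (ZMod n) k)
      - (X a : MvPolynomial (ZMod n) k) • Finsupp.single (cedge hs (a+1)) 1
      = -((sigmaK (k := k) hs a : Kmod k hs) : edgeSet hs →₀ MvPolynomial (ZMod n) k) := by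
    rw [sigmaK_val, neg_sub]
  rw [heq]
  apply Submodule.neg_mem
  exact Submodule.subset_span (Or.inr ⟨a, a+1, a+1+1, Or.inl rfl, Or.inl rfl, rfl⟩)

theorem edgeMon_cedge_monomial (hn : 3 ≤ n) (i : ZMod n) :
    edgeMon k hs (cedge hs i)
      = monomial (Finsupp.single i 1 + Finsupp.single (i+1) 1) (1:k) := by
  rw [edgeMon_eq_monomial, expo_cedge hs hn]

theorem disjoint_mem (hn : 3 ≤ n) (a b : ZMod n) (hab : a ≠ b)
    (h1 : ¬ b = a + 1) (h2 : ¬ a = b + 1) (u : ZMod n →₀ ℕ)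
    (hle1 : expo hs (cedge hs a) ≤ u) (hle2 : expo hs (cedge hs b) ≤ u) :
    (monomial (u - expo hs (cedge hs a)) (1:k)) •
        Finsupp.single (cedge hs a) (1 : MvPolynomial (ZMod n) k)
      - (monomial (u - expo hs (cedge hs b)) (1:k)) •
        Finsupp.single (cedge hs b) (1 : MvPolynomial (ZMod n) k)
      ∈ Submodule.span (MvPolynomial (ZMod n) k) (K0set hs ∪ relKset hs) := by
  rw [expo_cedge hs hn] at hle1 hle2 ⊢
  rw [expo_cedge hs hn]
  obtain ⟨hua, hua1⟩ := pair_le_elim hle1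
  obtain ⟨hub, hub1⟩ := pair_le_elim hle2
  have hq : (Finsupp.single a (1:ℕ) + Finsupp.single (a+1) 1)
      + (Finsupp.single b (1:ℕ) + Finsupp.single (b+1) 1) ≤ u :=
    quad_le_of a (a+1) b (b+1) (zmod_ne_add a 1 (zmod_one_ne hn)) hab h2
      (fun h => h1 h.symm) (fun h => hab (add_right_cancel h))
      (zmod_ne_add b 1 (zmod_one_ne hn)) u hua hua1 hub hub1
  set sa : ZMod n →₀ ℕ := Finsupp.single a (1:ℕ) + Finsupp.single (a+1) 1 with hsa
  set sb : ZMod n →₀ ℕ := Finsupp.single b (1:ℕ) + Finsupp.single (b+1) 1 with hsb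
  set w : ZMod n →₀ ℕ := u - (sa + sb) with hw
  have key1 : u - sa = w + sb := tsub_split u sa sb hq
  have key2 : u - sb = w + sa := by
    have h' : sb + sa ≤ u := by rw [add_comm]; exact hq
    have := tsub_split u sb sa h'
    rw [add_comm sb sa] at this
    exact this
  rw [key1, key2]
  have e1 : (monomial (w + sb) (1:k) : MvPolynomial (ZMod n) k)
      = monomial w 1 * edgeMon k hs (cedge hs b) := by
    rw [edgeMon_cedge_monomial hs hn, monomial_mul, mul_one]
  have e2 : (monomial (w + sa) (1:k) : MvPolynomial (ZMod n) k)
      = monomial w 1 * edgeMon k hs (cedge hs a) := by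
    rw [edgeMon_cedge_monomial hs hn, monomial_mul, mul_one]
  rw [e1, e2, mul_smul, mul_smul, ← smul_sub]
  apply Submodule.smul_mem
  refine Submodule.subset_span (Or.inl ⟨cedge hs b, cedge hs a, ?_, rfl⟩)
  intro h
  exact hab (cedge_inj hs hn h).symm

theorem ker_le_span (hn : 3 ≤ n) :
    Kmod k hs ≤ Submodule.span (MvPolynomial (ZMod n) k) (K0set hs ∪ relKset hs) := by
  intro p hp
  have hp' : Finsupp.linearCombination (MvPolynomial (ZMod n) k)
      (fun e : edgeSet hs => (monomial (expo hs e) (1:k) : MvPolynomial (ZMod n) k)) p = 0 := by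
    have hfun : (fun e : edgeSet hs => (monomial (expo hs e) (1:k) : MvPolynomial (ZMod n) k))
        = edgeMon k hs := funext fun e => (edgeMon_eq_monomial hs e).symm
    rw [hfun]
    exact LinearMap.mem_ker.mp hp
  have hmem := syzygy_thm (expo hs) p hp'
  refine Submodule.span_le.mpr ?_ hmem
  rintro z ⟨e, e', u, hne, hle1, hle2, rfl⟩
  have ha : e = cedge hs (idx hs e) := idx_spec hs e
  have hb : e' = cedge hs (idx hs e') := idx_spec hs e'
  set a := idx hs e with hadef
  set b := idx hs e' with hbdef
  have hab : a ≠ b := fun h => hne (by rw [ha, hb, h])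
  rw [ha] at hle1
  rw [hb] at hle2
  rw [ha, hb]
  by_cases hba : b = a + 1
  · rw [hba] at hle2 ⊢
    exact consec_mem hs hn a u hle1 hle2
  · by_cases hab1 : a = b + 1
    · rw [hab1] at hle1 ⊢
      have hm := consec_mem (k := k) hs hn b u hle2 hle1
      have := Submodule.neg_mem _ hm
      rwa [neg_sub] at this
    · exact disjoint_mem hs hn a b hab hba hab1 u hle1 hle2

theorem edge_mem (a : ZMod n) :
    (X a : MvPolynomial (ZMod n) k) * X (a+1)
      ∈ edgeIdeal k (fun i j : ZMod n => j = i + 1 ∨ i = j + 1) :=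
  Ideal.subset_span ⟨a, a+1, Or.inl rfl, rfl⟩

theorem quot_smul {I : Ideal (MvPolynomial (ZMod n) k)} (r x : MvPolynomial (ZMod n) k) :
    r • (Ideal.Quotient.mk I x) = Ideal.Quotient.mk I (r * x) := by
  have h1 : Ideal.Quotient.mk I (r * x) = Submodule.Quotient.mk (p := I) (r • x) := rfl
  rw [h1, Submodule.Quotient.mk_smul]
  rfl

theorem cedge_ne_succ (hn : 3 ≤ n) (i : ZMod n) : cedge hs i ≠ cedge hs (i+1) :=
  fun h => zmod_ne_add i 1 (zmod_one_ne hn) (cedge_inj hs hn h)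

theorem cedge_ne_succ2 (hn : 3 ≤ n) (i : ZMod n) : cedge hs i ≠ cedge hs (i+1+1) :=
  fun h => zmod_ne_add i 2 (zmod_two_ne hn)
    ((cedge_inj hs hn h).trans (by ring))

theorem smul_sigma_eq (i : ZMod n) :
    (X (i+1) : MvPolynomial (ZMod n) k) •
        ((sigmaK (k := k) hs i : Kmod k hs) : edgeSet hs →₀ MvPolynomial (ZMod n) k)
      = edgeMon k hs (cedge hs i) • Finsupp.single (cedge hs (i+1)) 1
        - edgeMon k hs (cedge hs (i+1)) • Finsupp.single (cedge hs i) 1 := by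
  rw [sigmaK_val, smul_sub, smul_smul, smul_smul, edgeMon_cedge, edgeMon_cedge,
    mul_comm ((X (i+1) : MvPolynomial (ZMod n) k)) (X i)]

theorem comb_eq (i : ZMod n) :
    (X (i+1+1+1) : MvPolynomial (ZMod n) k) •
        ((sigmaK (k := k) hs i : Kmod k hs) : edgeSet hs →₀ MvPolynomial (ZMod n) k)
      + (X i : MvPolynomial (ZMod n) k) •
        ((sigmaK (k := k) hs (i+1) : Kmod k hs) : edgeSet hs →₀ MvPolynomial (ZMod n) k)
      = edgeMon k hs (cedge hs i) • Finsupp.single (cedge hs (i+1+1)) 1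
        - edgeMon k hs (cedge hs (i+1+1)) • Finsupp.single (cedge hs i) 1 := by
  rw [sigmaK_val, sigmaK_val, edgeMon_cedge, edgeMon_cedge]
  module

theorem K0_mem_smul_sigma (hn : 3 ≤ n) (i : ZMod n) :
    (X (i+1) : MvPolynomial (ZMod n) k) •
        ((sigmaK (k := k) hs i : Kmod k hs) : edgeSet hs →₀ MvPolynomial (ZMod n) k)
      ∈ K0 k hs := by
  rw [smul_sigma_eq]
  exact Submodule.subset_span ⟨cedge hs i, cedge hs (i+1), cedge_ne_succ hs hn i, rfl⟩

theorem K0_mem_comb (hn : 3 ≤ n) (i : ZMod n) :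
    (X (i+1+1+1) : MvPolynomial (ZMod n) k) •
        ((sigmaK (k := k) hs i : Kmod k hs) : edgeSet hs →₀ MvPolynomial (ZMod n) k)
      + (X i : MvPolynomial (ZMod n) k) •
        ((sigmaK (k := k) hs (i+1) : Kmod k hs) : edgeSet hs →₀ MvPolynomial (ZMod n) k)
      ∈ K0 k hs := by
  rw [comb_eq]
  exact Submodule.subset_span ⟨cedge hs i, cedge hs (i+1+1), cedge_ne_succ2 hs hn i, rfl⟩

set_option maxHeartbeats 2000000 in
set_option synthInstance.maxHeartbeats 100000 in
theorem forward (hn : 3 ≤ n) (h4 : n ≠ 4) : T2Vanishes k hs := by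
  classical
  intro φ hφ
  have hAex : ∀ i : ZMod n, ∃ A : RR, QQ A = φ (sigmaK hs i) :=
    fun i => Ideal.Quotient.mk_surjective _
  choose A hA using hAex
  -- condition 1
  have hcond1 : ∀ i : ZMod n, (X (i+1) : RR) * A i ∈ II := by
    intro i
    have hk0 : ((X (i+1) : RR) • sigmaK hs i : Kmod k hs)
        ∈ {z : Kmod k hs | (z : edgeSet hs →₀ RR) ∈ K0 k hs} := by
      rw [Set.mem_setOf_eq, Submodule.coe_smul]
      exact K0_mem_smul_sigma hs hn i
    have h0 : φ ((X (i+1) : RR) • sigmaK hs i) = 0 := hφ _ hk0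
    rw [map_smul, ← hA, quot_smul] at h0
    exact Ideal.Quotient.eq_zero_iff_mem.mp h0
  -- condition 2
  have hcond2 : ∀ i : ZMod n, (X (i+1+1+1) : RR) * A i + X i * A (i+1) ∈ II := by
    intro i
    have hk0 : (((X (i+1+1+1) : RR) • sigmaK hs i
          + (X i : RR) • sigmaK hs (i+1) : Kmod k hs))
        ∈ {z : Kmod k hs | (z : edgeSet hs →₀ RR) ∈ K0 k hs} := by
      rw [Set.mem_setOf_eq, Submodule.coe_add, Submodule.coe_smul, Submodule.coe_smul]
      exact K0_mem_comb hs hn i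
    have h0 : φ ((X (i+1+1+1) : RR) • sigmaK hs i + (X i : RR) • sigmaK hs (i+1)) = 0 :=
      hφ _ hk0
    rw [map_add, map_smul, map_smul, ← hA, ← hA, quot_smul, quot_smul] at h0
    rw [← RingHom.map_add (Ideal.Quotient.mk (edgeIdeal k (fun i j : ZMod n => j = i + 1 ∨ i = j + 1)))] at h0
    exact Ideal.Quotient.eq_zero_iff_mem.mp h0
  -- decomposition of A i
  have hdec : ∀ i : ZMod n, ∃ v u : RR, A i - (v * X i + u * X (i+1+1)) ∈ II := by
    intro i
    have h := colon_A hn i (A i) (hcond1 i)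
    rw [Set.image_insert_eq, Set.image_singleton] at h
    obtain ⟨y, hy, z, hz, hyz⟩ := Submodule.mem_sup.mp h
    obtain ⟨av, au, hz'⟩ := Ideal.mem_span_pair.mp hz
    refine ⟨av, au, ?_⟩
    have h2 : i + 2 = i + 1 + 1 := by ring
    rw [← h2]
    have heq : A i - (av * X i + au * X (i+2)) = y := by
      rw [← hyz, ← hz']; ring
    rw [heq]; exact hy
  choose Vf Uf hVU using hdec
  -- the W decomposition
  have hWms : ∀ i : ZMod n, ∃ p q s' t : RR,
      (Vf i + Uf (i+1)) - (p * X (i-1) + q * X (i+1) + s' * X (i+1+1)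
        + t * X (i+1+1+1+1)) ∈ II := by
    intro i
    have hprod : (X i : RR) * X (i+1+1+1) * (Vf i + Uf (i+1)) ∈ II := by
      have hG := hcond2 i
      have hP1 := hVU i
      have hP2 := hVU (i+1)
      have hE1 : (X (i+1+1) : RR) * X (i+1+1+1) ∈ II := edge_mem (i+1+1)
      have hE2 : (X i : RR) * X (i+1) ∈ II := edge_mem i
      have hiden : (X i : RR) * X (i+1+1+1) * (Vf i + Uf (i+1))
          = (X (i+1+1+1) * A i + X i * A (i+1))
            - X (i+1+1+1) * (A i - (Vf i * X i + Uf i * X (i+1+1)))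
            - X i * (A (i+1) - (Vf (i+1) * X (i+1) + Uf (i+1) * X (i+1+1+1)))
            - Uf i * (X (i+1+1) * X (i+1+1+1))
            - Vf (i+1) * (X i * X (i+1)) := by ring
      rw [hiden]
      exact sub_mem (sub_mem (sub_mem (sub_mem hG (Ideal.mul_mem_left _ _ hP1))
        (Ideal.mul_mem_left _ _ hP2)) (Ideal.mul_mem_left _ _ hE1))
        (Ideal.mul_mem_left _ _ hE2)
    have hne1 : (i+1+1+1 : ZMod n) ≠ i + 1 := fun h =>
      zmod_ne_add (i+1) 2 (zmod_two_ne hn) (h.symm.trans (by ring))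
    have hne2 : (i : ZMod n) ≠ (i+1+1+1) + 1 := fun h =>
      zmod_ne_add i 4 (zmod_four_ne hn h4) (h.trans (by ring))
    have hB := colon_B hn i (i+1+1+1) hne1 hne2 _ hprod
    rw [show (i+1+1+1 : ZMod n) - 1 = i + 1 + 1 from by ring] at hB
    rw [Set.image_insert_eq, Set.image_insert_eq, Set.image_insert_eq,
      Set.image_singleton] at hB
    obtain ⟨y, hy, z, hz, hyz⟩ := Submodule.mem_sup.mp hB
    rw [← Ideal.submodule_span_eq, Submodule.mem_span_insert] at hz
    obtain ⟨r1, z1, hz1mem, hz1⟩ := hz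
    rw [Submodule.mem_span_insert] at hz1mem
    obtain ⟨r2, z2, hz2mem, hz2⟩ := hz1mem
    rw [Submodule.mem_span_insert] at hz2mem
    obtain ⟨r3, z3, hz3mem, hz3⟩ := hz2mem
    rw [Submodule.mem_span_singleton] at hz3mem
    obtain ⟨r4, hz4⟩ := hz3mem
    refine ⟨r2, r1, r4, r3, ?_⟩
    have heq : (Vf i + Uf (i+1)) - (r2 * X (i-1) + r1 * X (i+1) + r4 * X (i+1+1)
        + r3 * X (i+1+1+1+1)) = y := by
      rw [← hyz, hz1, hz2, hz3, ← hz4]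
      simp only [smul_eq_mul]
      ring
    rw [heq]; exact hy
  choose Pf Qf Sf Tf hPQST using hWms
  -- the lifted witnesses
  have key : ∀ i : ZMod n,
      X i * (-(Uf (i+1)) - X (i+1) * Sf (i+1) + X (i+1+1+1+1) * Tf (i+1-1))
        - X (i+1+1) * (-(Uf i) - X i * Sf i + X (i+1+1+1) * Tf (i-1)) - A i ∈ II := by
    intro i
    have hZ := hPQST i
    have hY := hVU i
    have hEa : (X i : RR) * X (i+1) ∈ II := edge_mem i
    have hEb : (X (i+1+1) : RR) * X (i+1+1+1) ∈ II := edge_mem (i+1+1)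
    have hEc : (X (i-1) : RR) * X i ∈ II := by
      have h := edge_mem (k := k) (i-1)
      rw [show (i : ZMod n) - 1 + 1 = i from by ring] at h
      exact h
    rw [show (i : ZMod n) + 1 - 1 = i from by ring]
    have hiden : X i * (-(Uf (i+1)) - X (i+1) * Sf (i+1) + X (i+1+1+1+1) * Tf i)
        - X (i+1+1) * (-(Uf i) - X i * Sf i + X (i+1+1+1) * Tf (i-1)) - A i
        = -(X i * ((Vf i + Uf (i+1)) - (Pf i * X (i-1) + Qf i * X (i+1)
              + Sf i * X (i+1+1) + Tf i * X (i+1+1+1+1))))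
          - (A i - (Vf i * X i + Uf i * X (i+1+1)))
          - (Sf (i+1) + Qf i) * (X i * X (i+1))
          - Tf (i-1) * (X (i+1+1) * X (i+1+1+1))
          - Pf i * (X (i-1) * X i) := by ring
    rw [hiden]
    exact sub_mem (sub_mem (sub_mem (sub_mem (neg_mem (Ideal.mul_mem_left _ _ hZ)) hY)
      (Ideal.mul_mem_left _ _ hEa)) (Ideal.mul_mem_left _ _ hEb))
      (Ideal.mul_mem_left _ _ hEc)
  -- the extension
  refine ⟨Finsupp.linearCombination _
    (fun e : edgeSet hs => QQ (-(Uf (idx hs e)) - X (idx hs e) * Sf (idx hs e)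
      + X (idx hs e + 1+1+1) * Tf (idx hs e - 1))), ?_⟩
  set c : edgeSet hs → (RR ⧸ II) :=
    fun e : edgeSet hs => QQ (-(Uf (idx hs e)) - X (idx hs e) * Sf (idx hs e)
      + X (idx hs e + 1+1+1) * Tf (idx hs e - 1)) with hcdef
  have hcc : ∀ j : ZMod n, c (cedge hs j)
      = QQ (-(Uf j) - X j * Sf j + X (j+1+1+1) * Tf (j - 1)) := by
    intro j
    rw [hcdef]
    simp only [idx_cedge hs hn]
  have hmain : ∀ u : ZMod n, φ (sigmaK hs u)
      = Finsupp.linearCombination RR c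
          ((sigmaK (k := k) hs u : Kmod k hs) : edgeSet hs →₀ RR) := by
    intro u
    rw [sigmaK_val, map_sub, map_smul, map_smul, Finsupp.linearCombination_single,
      Finsupp.linearCombination_single, one_smul, one_smul, hcc, hcc]
    rw [quot_smul, quot_smul, ← map_sub, ← hA, Ideal.Quotient.mk_eq_mk_iff_sub_mem]
    rw [show (u : ZMod n) + 1 - 1 = u from by ring]
    have h := key u
    rw [show (u : ZMod n) + 1 - 1 = u from by ring] at h
    have heq : A u - (X u * (-(Uf (u+1)) - X (u+1) * Sf (u+1) + X (u+1+1+1+1) * Tf u)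
          - X (u+1+1) * (-(Uf u) - X u * Sf u + X (u+1+1+1) * Tf (u-1)))
        = -(X u * (-(Uf (u+1)) - X (u+1) * Sf (u+1) + X (u+1+1+1+1) * Tf u)
          - X (u+1+1) * (-(Uf u) - X u * Sf u + X (u+1+1+1) * Tf (u-1)) - A u) := by
      ring
    rw [heq]
    exact neg_mem h
  intro z
  have hz1 : (z : edgeSet hs →₀ RR)
      ∈ Submodule.span RR (K0set hs ∪ relKset hs) :=
    ker_le_span hs hn z.2
  have hind : ∀ x, x ∈ Submodule.span RR (K0set hs ∪ relKset hs) →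
      ∃ h : x ∈ Kmod k hs, φ ⟨x, h⟩ = Finsupp.linearCombination RR c x := by
    intro x hx
    induction hx using Submodule.span_induction with
    | mem x hx =>
      rcases hx with ⟨e, e', hne, rfl⟩ | ⟨u, v, w, h1, h2, rfl⟩
      · -- Koszul generator
        have hm : (edgeMon k hs e • Finsupp.single e' (1 : RR)
            - edgeMon k hs e' • Finsupp.single e 1) ∈ Kmod k hs := by
          rw [Kmod, LinearMap.mem_ker, map_sub, map_smul, map_smul]
          simp only [jmap]
          rw [Finsupp.linearCombination_single, Finsupp.linearCombination_single]
          simp [mul_comm]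
        refine ⟨hm, ?_⟩
        have h0 : φ ⟨_, hm⟩ = 0 := hφ _ (Submodule.subset_span ⟨e, e', hne, rfl⟩)
        rw [h0, map_sub, map_smul, map_smul, Finsupp.linearCombination_single,
          Finsupp.linearCombination_single, one_smul, one_smul, hcdef]
        simp only []
        rw [quot_smul, quot_smul,
          Ideal.Quotient.eq_zero_iff_mem.mpr (Ideal.mul_mem_right _ _ (edgeMon_mem hs e)),
          Ideal.Quotient.eq_zero_iff_mem.mpr (Ideal.mul_mem_right _ _ (edgeMon_mem hs e'))]
        simp
      · -- relK generator
        refine ⟨(relK k hs u v w h1 h2).2, ?_⟩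
        have h1c := h1
        have h2c := h2
        rcases h1c with hv | hu <;> rcases h2c with hw | hv2
        · -- v = u+1, w = v+1 : sigma
          subst hv; subst hw
          have hsg : (⟨_, (relK k hs u (u+1) (u+1+1) h1 h2).2⟩ : Kmod k hs)
              = sigmaK hs u := Subtype.ext rfl
          rw [hsg]
          exact hmain u
        · -- v = u+1, v = w+1 : w = u, degenerate
          have hwu : w = u := by
            have h' := hv.symm.trans hv2
            exact (add_right_cancel h').symm
          subst hwu
          have hE : mkEdge hs v w h2 = mkEdge hs w v h1 := Subtype.ext Sym2.eq_swap
          have hval : ((relK k hs w v w h1 h2 : Kmod k hs) : edgeSet hs →₀ RR) = 0 := by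
            show (X w : RR) • Finsupp.single (mkEdge hs v w h2) 1
              - (X w : RR) • Finsupp.single (mkEdge hs w v h1) 1 = 0
            rw [hE, sub_self]
          have h0 : (⟨_, (relK k hs w v w h1 h2).2⟩ : Kmod k hs) = 0 := Subtype.ext hval
          rw [h0, map_zero, hval, map_zero]
        · -- u = v+1, w = v+1 : w = u, degenerate
          have hwu : w = u := hw.trans hu.symm
          subst hwu
          have hE : mkEdge hs v w h2 = mkEdge hs w v h1 := Subtype.ext Sym2.eq_swap
          have hval : ((relK k hs w v w h1 h2 : Kmod k hs) : edgeSet hs →₀ RR) = 0 := by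
            show (X w : RR) • Finsupp.single (mkEdge hs v w h2) 1
              - (X w : RR) • Finsupp.single (mkEdge hs w v h1) 1 = 0
            rw [hE, sub_self]
          have h0 : (⟨_, (relK k hs w v w h1 h2).2⟩ : Kmod k hs) = 0 := Subtype.ext hval
          rw [h0, map_zero, hval, map_zero]
        · -- u = v+1, v = w+1 : reversed sigma
          subst hu; subst hv2
          have hE1 : mkEdge hs (w+1) w h2 = cedge hs w := Subtype.ext Sym2.eq_swap
          have hE2 : mkEdge hs (w+1+1) (w+1) h1 = cedge hs (w+1) := Subtype.ext Sym2.eq_swap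
          have hval : ((relK k hs (w+1+1) (w+1) w h1 h2 : Kmod k hs) : edgeSet hs →₀ RR)
              = -(((sigmaK (k := k) hs w : Kmod k hs) : edgeSet hs →₀ RR)) := by
            show (X (w+1+1) : RR) • Finsupp.single (mkEdge hs (w+1) w h2) 1
              - (X w : RR) • Finsupp.single (mkEdge hs (w+1+1) (w+1) h1) 1 = _
            rw [hE1, hE2, sigmaK_val, neg_sub]
          have h0 : (⟨_, (relK k hs (w+1+1) (w+1) w h1 h2).2⟩ : Kmod k hs)
              = -(sigmaK hs w) := Subtype.ext (by rw [hval]; rfl)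
          rw [h0, hval, LinearMap.map_neg, ← hmain w]
          exact map_neg φ _
    | zero =>
      refine ⟨Submodule.zero_mem _, ?_⟩
      have h0 : (⟨0, Submodule.zero_mem (Kmod k hs)⟩ : Kmod k hs) = 0 := Subtype.ext rfl
      rw [h0, map_zero, map_zero]
    | add x y hx hy ihx ihy =>
      obtain ⟨hmx, ex⟩ := ihx
      obtain ⟨hmy, ey⟩ := ihy
      refine ⟨Submodule.add_mem _ hmx hmy, ?_⟩
      have h0 : (⟨x + y, Submodule.add_mem _ hmx hmy⟩ : Kmod k hs)
          = ⟨x, hmx⟩ + ⟨y, hmy⟩ := Subtype.ext rfl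
      rw [h0, map_add, ex, ey, ← map_add]
    | smul r x hx ihx =>
      obtain ⟨hmx, ex⟩ := ihx
      refine ⟨Submodule.smul_mem _ r hmx, ?_⟩
      have h0 : (⟨r • x, Submodule.smul_mem _ r hmx⟩ : Kmod k hs)
          = r • (⟨x, hmx⟩ : Kmod k hs) := Subtype.ext rfl
      rw [h0, map_smul, ex, ← map_smul]
  obtain ⟨hmem, heq⟩ := hind (z : edgeSet hs →₀ RR) hz1
  have hzz : z = ⟨(z : edgeSet hs →₀ RR), hmem⟩ := Subtype.ext rfl
  rw [hzz]
  exact heq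

end Cycle

section KillDiff

variable {k : Type*} [Field k]

theorem aeval_kill_diff {V : Type*} (g : V → MvPolynomial V k)
    (T : Set (MvPolynomial V k))
    (hg : ∀ i, g i = X i ∨ (g i = 0 ∧ (X i : MvPolynomial V k) ∈ Ideal.span T))
    (r : MvPolynomial V k) :
    r - aeval g r ∈ Ideal.span T := by
  induction r using MvPolynomial.induction_on with
  | C a =>
    rw [aeval_C]
    simp
  | add p q hp hq =>
    rw [map_add]
    have hiden : p + q - (aeval g p + aeval g q) = (p - aeval g p) + (q - aeval g q) := by
      ring
    rw [hiden]
    exact add_mem hp hq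
  | mul_X p i hp =>
    rw [map_mul, aeval_X]
    have hiden : p * X i - aeval g p * g i
        = (p - aeval g p) * X i + aeval g p * (X i - g i) := by ring
    rw [hiden]
    apply add_mem (Ideal.mul_mem_right _ _ hp)
    rcases hg i with h | ⟨h0, hmem⟩
    · rw [h, sub_self, mul_zero]
      exact zero_mem _
    · rw [h0, sub_zero]
      exact Ideal.mul_mem_left _ _ hmem

end KillDiff

section C4

variable {k : Type*} [Field k]
  (hs : Symmetric (fun i j : ZMod 4 => j = i + 1 ∨ i = j + 1))

local notation "R4" => MvPolynomial (ZMod 4) k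
local notation "I4" => edgeIdeal k (fun i j : ZMod 4 => j = i + 1 ∨ i = j + 1)
local notation "Q4" => Ideal.Quotient.mk (edgeIdeal k (fun i j : ZMod 4 => j = i + 1 ∨ i = j + 1))

/-- kill x1 and x3 -/
noncomputable def g13 : ZMod 4 → MvPolynomial (ZMod 4) k :=
  fun i => if i = 1 ∨ i = 3 then 0 else X i

/-- kill x0 and x3 -/
noncomputable def g03 : ZMod 4 → MvPolynomial (ZMod 4) k :=
  fun i => if i = 0 ∨ i = 3 then 0 else X i

theorem hg13 : ∀ i : ZMod 4, (g13 (k := k)) i = X i ∨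
    ((g13 (k := k)) i = 0 ∧ (X i : R4) ∈ Ideal.span {X 1, X 3}) := by
  intro i
  by_cases h : i = 1 ∨ i = 3
  · right
    refine ⟨by rw [g13, if_pos h], ?_⟩
    rcases h with h | h
    · subst h; exact Ideal.subset_span (Set.mem_insert _ _)
    · subst h; exact Ideal.subset_span (Set.mem_insert_of_mem _ rfl)
  · left; rw [g13, if_neg h]

theorem hg03 : ∀ i : ZMod 4, (g03 (k := k)) i = X i ∨
    ((g03 (k := k)) i = 0 ∧ (X i : R4) ∈ Ideal.span {X 0, X 3}) := by
  intro i
  by_cases h : i = 0 ∨ i = 3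
  · right
    refine ⟨by rw [g03, if_pos h], ?_⟩
    rcases h with h | h
    · subst h; exact Ideal.subset_span (Set.mem_insert _ _)
    · subst h; exact Ideal.subset_span (Set.mem_insert_of_mem _ rfl)
  · left; rw [g03, if_neg h]

theorem g13_0 : (g13 (k := k)) 0 = X 0 := by rw [g13, if_neg (by decide)]
theorem g13_1 : (g13 (k := k)) 1 = 0 := by rw [g13, if_pos (by decide)]
theorem g13_2 : (g13 (k := k)) 2 = X 2 := by rw [g13, if_neg (by decide)]
theorem g13_3 : (g13 (k := k)) 3 = 0 := by rw [g13, if_pos (by decide)]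

theorem edgeMon_bar13 (e : edgeSet hs) : aeval (g13 (k := k)) (edgeMon k hs e) = 0 := by
  rw [idx_spec hs e, edgeMon_cedge, map_mul, aeval_X, aeval_X]
  set i := idx hs e
  have h : (i = 1 ∨ i = 3) ∨ (i + 1 = 1 ∨ i + 1 = 3) := by
    have : ∀ j : ZMod 4, (j = 1 ∨ j = 3) ∨ (j + 1 = 1 ∨ j + 1 = 3) := by decide
    exact this i
  rcases h with h | h
  · rw [show (g13 (k := k)) i = 0 from by rw [g13, if_pos h], zero_mul]
  · rw [show (g13 (k := k)) (i+1) = 0 from by rw [g13, if_pos h], mul_zero]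

theorem edgeMon_bar03 (i : ZMod 4) :
    aeval (g03 (k := k)) (edgeMon k hs (cedge hs i))
      = if i = 1 then (X 1 : R4) * X 2 else 0 := by
  rw [edgeMon_cedge, map_mul, aeval_X, aeval_X]
  have h : ∀ j : ZMod 4, j = 0 ∨ j = 1 ∨ j = 2 ∨ j = 3 := by decide
  rcases h i with h0 | h1 | h2 | h3
  · subst h0
    rw [if_neg (by decide), show (g03 (k := k)) 0 = 0 from by rw [g03, if_pos (by decide)],
      zero_mul]
  · subst h1
    rw [if_pos rfl, show ((1 : ZMod 4) + 1) = 2 from by decide,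
      show (g03 (k := k)) 1 = X 1 from by rw [g03, if_neg (by decide)],
      show (g03 (k := k)) 2 = X 2 from by rw [g03, if_neg (by decide)]]
  · subst h2
    rw [if_neg (by decide), show ((2 : ZMod 4) + 1) = 3 from by decide,
      show (g03 (k := k)) 3 = 0 from by rw [g03, if_pos (by decide)], mul_zero]
  · subst h3
    rw [if_neg (by decide), show (g03 (k := k)) 3 = 0 from by rw [g03, if_pos (by decide)],
      zero_mul]

/-- For a syzygy `p`, the coefficient of the edge `{1,2}` lies in `(x0, x3)`. -/
theorem syz_coeff_mem (p : edgeSet hs →₀ R4) (hp : p ∈ Kmod k hs) :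
    (p (cedge hs 1) : R4) ∈ Ideal.span {X 0, X 3} := by
  have hj : jmap k hs p = 0 := LinearMap.mem_ker.mp hp
  have h0 : aeval (g03 (k := k)) (jmap k hs p) = 0 := by rw [hj, map_zero]
  rw [jmap, Finsupp.linearCombination_apply, Finsupp.sum, map_sum] at h0
  have hterm : ∀ e ∈ p.support,
      aeval (g03 (k := k)) (p e • edgeMon k hs e)
        = aeval (g03 (k := k)) (p e) * aeval (g03 (k := k)) (edgeMon k hs e) := by
    intro e _
    rw [smul_eq_mul, map_mul]
  rw [Finset.sum_congr rfl hterm] at h0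
  have hsingle : ∑ e ∈ p.support,
      aeval (g03 (k := k)) (p e) * aeval (g03 (k := k)) (edgeMon k hs e)
      = aeval (g03 (k := k)) (p (cedge hs 1)) * ((X 1 : R4) * X 2) := by
    rw [Finset.sum_eq_single (cedge hs 1)]
    · rw [edgeMon_bar03, if_pos rfl]
    · intro e he hne
      rw [idx_spec hs e, edgeMon_bar03, if_neg, mul_zero]
      intro h1
      exact hne (by rw [idx_spec hs e, h1])
    · intro h
      rw [Finsupp.notMem_support_iff.mp h, map_zero, zero_mul]
  rw [hsingle] at h0
  have hX12 : ((X 1 : R4) * X 2) ≠ 0 :=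
    mul_ne_zero (MvPolynomial.X_ne_zero _) (MvPolynomial.X_ne_zero _)
  have hz : aeval (g03 (k := k)) (p (cedge hs 1)) = 0 := by
    rcases mul_eq_zero.mp h0 with h | h
    · exact h
    · exact absurd h hX12
  have := aeval_kill_diff (g03 (k := k)) {X 0, X 3} hg03 (p (cedge hs 1))
  rwa [hz, sub_zero] at this

/-- The obstruction map for `C₄`. -/
noncomputable def Phi : Kmod k hs →ₗ[MvPolynomial (ZMod 4) k]
    MvPolynomial (ZMod 4) k ⧸ edgeIdeal k (fun i j : ZMod 4 => j = i + 1 ∨ i = j + 1) where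
  toFun z := Q4 (aeval (g13 (k := k)) ((z : edgeSet hs →₀ R4) (cedge hs 1)))
  map_add' z w := by
    rw [Submodule.coe_add, Finsupp.add_apply, map_add]
    exact RingHom.map_add _ _ _
  map_smul' r z := by
    rw [RingHom.id_apply, Submodule.coe_smul, Finsupp.smul_apply, smul_eq_mul, map_mul]
    set y := (z : edgeSet hs →₀ R4) (cedge hs 1) with hy
    have hymem : y ∈ Ideal.span {X 0, X 3} := syz_coeff_mem hs _ z.2
    obtain ⟨a, b, hab⟩ := Ideal.mem_span_pair.mp hymem
    have hbary : aeval (g13 (k := k)) y = aeval (g13 (k := k)) a * X 0 := by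
      rw [← hab, map_add, map_mul, map_mul, aeval_X, aeval_X, g13_0, g13_3,
        mul_zero, add_zero]
    have hr : r - aeval (g13 (k := k)) r ∈ Ideal.span {X 1, X 3} :=
      aeval_kill_diff _ _ hg13 r
    obtain ⟨u, v, huv⟩ := Ideal.mem_span_pair.mp hr
    have hE0 : (X 0 : R4) * X 1 ∈ I4 := by
      have h := edge_mem (k := k) (n := 4) 0
      rwa [show ((0:ZMod 4)+1) = 1 from by decide] at h
    have hE3 : (X 3 : R4) * X 0 ∈ I4 := by
      have h := edge_mem (k := k) (n := 4) 3
      rwa [show ((3:ZMod 4)+1) = 0 from by decide] at h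
    have hiden : (aeval (g13 (k := k)) r - r) * aeval (g13 (k := k)) y
        = (-(u * aeval (g13 (k := k)) a)) * ((X 0 : R4) * X 1)
          + (-(v * aeval (g13 (k := k)) a)) * ((X 3 : R4) * X 0) := by
      linear_combination (aeval (g13 (k := k)) y) * huv
        - (u * (X 1 : R4) + v * X 3) * hbary
    have hdiff : (aeval (g13 (k := k)) r - r) * aeval (g13 (k := k)) y ∈ I4 := by
      rw [hiden]
      exact add_mem (Ideal.mul_mem_left _ _ hE0) (Ideal.mul_mem_left _ _ hE3)
    rw [quot_smul, Ideal.Quotient.mk_eq_mk_iff_sub_mem]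
    have heq : aeval (g13 (k := k)) r * aeval (g13 (k := k)) y - r * aeval (g13 (k := k)) y
        = (aeval (g13 (k := k)) r - r) * aeval (g13 (k := k)) y := by ring
    rw [heq]
    exact hdiff

set_option maxHeartbeats 1000000 in
theorem Phi_vanish : VanishesOnK0 k hs (Phi hs) := by
  intro z hz
  show Q4 (aeval (g13 (k := k)) ((z : edgeSet hs →₀ R4) (cedge hs 1))) = 0
  rw [Ideal.Quotient.eq_zero_iff_mem]
  have hgen : ∀ x ∈ K0 k hs,
      aeval (g13 (k := k)) ((x : edgeSet hs →₀ R4) (cedge hs 1)) ∈ I4 := by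
    intro x hx
    induction hx using Submodule.span_induction with
    | mem x hx =>
      obtain ⟨e, e', hne, rfl⟩ := hx
      rw [Finsupp.sub_apply, Finsupp.smul_apply, Finsupp.smul_apply, smul_eq_mul,
        smul_eq_mul, map_sub, map_mul, map_mul, edgeMon_bar13, edgeMon_bar13,
        zero_mul, zero_mul, sub_zero]
      exact zero_mem _
    | zero =>
      rw [Finsupp.coe_zero, Pi.zero_apply, map_zero]
      exact zero_mem _
    | add x y _ _ ihx ihy =>
      rw [Finsupp.add_apply, map_add]
      exact add_mem ihx ihy
    | smul r x _ ih =>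
      rw [Finsupp.smul_apply, smul_eq_mul, map_mul]
      exact Ideal.mul_mem_left _ _ ih
  exact hgen _ hz

set_option maxHeartbeats 2000000 in
set_option synthInstance.maxHeartbeats 100000 in
theorem backward4 : ¬ T2Vanishes k hs := by
  intro hT
  obtain ⟨ψ, hψ⟩ := hT (Phi hs) (Phi_vanish hs)
  have h01 : (1 : ZMod 4) = 0 + 1 ∨ (0 : ZMod 4) = 1 + 1 := Or.inl (by decide)
  have h12 : (2 : ZMod 4) = 1 + 1 ∨ (1 : ZMod 4) = 2 + 1 := Or.inl (by decide)
  have h23 : (3 : ZMod 4) = 2 + 1 ∨ (2 : ZMod 4) = 3 + 1 := Or.inl (by decide)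
  have he01 : mkEdge hs 0 1 h01 = cedge hs 0 :=
    Subtype.ext (by rw [cedge_val, show ((0:ZMod 4)+1) = 1 from by decide]; rfl)
  have he12 : mkEdge hs 1 2 h12 = cedge hs 1 :=
    Subtype.ext (by rw [cedge_val, show ((1:ZMod 4)+1) = 2 from by decide]; rfl)
  have he23 : mkEdge hs 2 3 h23 = cedge hs 2 :=
    Subtype.ext (by rw [cedge_val, show ((2:ZMod 4)+1) = 3 from by decide]; rfl)
  have hn4 : (3:ℕ) ≤ 4 := by norm_num
  have hne01 : cedge hs 0 ≠ cedge hs 1 := fun h => by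
    have := cedge_inj hs hn4 h
    exact absurd this (by decide)
  have hne21 : cedge hs 2 ≠ cedge hs 1 := fun h => by
    have := cedge_inj hs hn4 h
    exact absurd this (by decide)
  -- values at the relations
  have hσ0val : ((relK k hs 0 1 2 h01 h12 : Kmod k hs) : edgeSet hs →₀ R4) (cedge hs 1)
      = X 0 := by
    show (((X 0 : R4) • Finsupp.single (mkEdge hs 1 2 h12) (1:R4)
      - (X 2 : R4) • Finsupp.single (mkEdge hs 0 1 h01) (1:R4) : edgeSet hs →₀ R4))
        (cedge hs 1) = X 0
    rw [he12, he01, Finsupp.sub_apply, Finsupp.smul_apply, Finsupp.smul_apply,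
      Finsupp.single_apply, Finsupp.single_apply, if_pos rfl, if_neg hne01]
    simp
  have hσ1val : ((relK k hs 1 2 3 h12 h23 : Kmod k hs) : edgeSet hs →₀ R4) (cedge hs 1)
      = -(X 3) := by
    show (((X 1 : R4) • Finsupp.single (mkEdge hs 2 3 h23) (1:R4)
      - (X 3 : R4) • Finsupp.single (mkEdge hs 1 2 h12) (1:R4) : edgeSet hs →₀ R4))
        (cedge hs 1) = -(X 3)
    rw [he12, he23, Finsupp.sub_apply, Finsupp.smul_apply, Finsupp.smul_apply,
      Finsupp.single_apply, Finsupp.single_apply, if_pos rfl, if_neg hne21]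
    simp
  -- the values of Phi
  have hPhi0 : Phi (k := k) hs (relK k hs 0 1 2 h01 h12) = Q4 (X 0) := by
    show Q4 (aeval (g13 (k := k)) _) = Q4 (X 0)
    rw [hσ0val, aeval_X, g13_0]
  have hPhi1 : Phi (k := k) hs (relK k hs 1 2 3 h12 h23) = 0 := by
    show Q4 (aeval (g13 (k := k)) _) = 0
    rw [hσ1val, map_neg, aeval_X, g13_3, neg_zero, map_zero]
  -- the ψ equations
  obtain ⟨C1, hC1⟩ := Ideal.Quotient.mk_surjective (ψ (Finsupp.single (cedge hs 1) (1:R4)))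
  obtain ⟨C0, hC0⟩ := Ideal.Quotient.mk_surjective (ψ (Finsupp.single (cedge hs 0) (1:R4)))
  obtain ⟨C2, hC2⟩ := Ideal.Quotient.mk_surjective (ψ (Finsupp.single (cedge hs 2) (1:R4)))
  have heq1 : (X 0 : R4) * C1 - X 2 * C0 - X 0 ∈ I4 := by
    have h := (hψ (relK k hs 0 1 2 h01 h12)).symm
    rw [hPhi0] at h
    have hval : ((relK k hs 0 1 2 h01 h12 : Kmod k hs) : edgeSet hs →₀ R4)
        = (X 0 : R4) • Finsupp.single (cedge hs 1) 1
          - (X 2 : R4) • Finsupp.single (cedge hs 0) 1 := by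
      show (X 0 : R4) • Finsupp.single (mkEdge hs 1 2 h12) (1:R4)
        - (X 2 : R4) • Finsupp.single (mkEdge hs 0 1 h01) 1 = _
      rw [he12, he01]
    rw [hval, map_sub, map_smul, map_smul, ← hC1, ← hC0, quot_smul, quot_smul,
      ← map_sub] at h
    rw [← Ideal.Quotient.mk_eq_mk_iff_sub_mem]
    exact h
  have heq2 : (X 1 : R4) * C2 - X 3 * C1 ∈ I4 := by
    have h := (hψ (relK k hs 1 2 3 h12 h23)).symm
    rw [hPhi1] at h
    have hval : ((relK k hs 1 2 3 h12 h23 : Kmod k hs) : edgeSet hs →₀ R4)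
        = (X 1 : R4) • Finsupp.single (cedge hs 2) 1
          - (X 3 : R4) • Finsupp.single (cedge hs 1) 1 := by
      show (X 1 : R4) • Finsupp.single (mkEdge hs 2 3 h23) (1:R4)
        - (X 3 : R4) • Finsupp.single (mkEdge hs 1 2 h12) 1 = _
      rw [he23, he12]
    rw [hval, map_sub, map_smul, map_smul, ← hC2, ← hC1, quot_smul, quot_smul,
      ← map_sub] at h
    rw [← Ideal.Quotient.eq_zero_iff_mem, h]
  -- evaluations
  have hIvanish : ∀ (g : ZMod 4 → R4),
      (∀ a b : ZMod 4, (b = a + 1 ∨ a = b + 1) → g a * g b = 0) →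
      ∀ y ∈ (I4 : Ideal R4), aeval g y = 0 := by
    intro g hg y hy
    induction hy using Submodule.span_induction with
    | mem x hx =>
      obtain ⟨a, b, hab, rfl⟩ := hx
      rw [map_mul, aeval_X, aeval_X]
      exact hg a b hab
    | zero => exact map_zero _
    | add x y _ _ ihx ihy => rw [map_add, ihx, ihy, add_zero]
    | smul r x _ ih => rw [smul_eq_mul, map_mul, ih, mul_zero]
  have hF1z : ∀ y ∈ (I4 : Ideal R4),
      aeval (fun i : ZMod 4 => if i = 0 then (X 0 : R4) else 0) y = 0 := by
    apply hIvanish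
    intro a b hab
    by_cases ha : a = 0
    · subst ha
      have hb : b ≠ 0 := by
        rcases hab with h | h
        · rw [h]; decide
        · have : b = 3 := by
            have hh : ∀ c : ZMod 4, (0 : ZMod 4) = c + 1 → c = 3 := by decide
            exact hh b h
          rw [this]; decide
      rw [if_neg hb, mul_zero]
    · rw [if_neg ha, zero_mul]
  have hF3z : ∀ y ∈ (I4 : Ideal R4),
      aeval (fun i : ZMod 4 => if i = 3 then (X 3 : R4) else 0) y = 0 := by
    apply hIvanish
    intro a b hab
    by_cases ha : a = 3
    · subst ha
      have hb : b ≠ 3 := by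
        rcases hab with h | h
        · rw [h]; decide
        · have : b = 2 := by
            have hh : ∀ c : ZMod 4, (3 : ZMod 4) = c + 1 → c = 2 := by decide
            exact hh b h
          rw [this]; decide
      rw [if_neg hb, mul_zero]
    · rw [if_neg ha, zero_mul]
  -- apply F1
  have hF1C1 : aeval (fun i : ZMod 4 => if i = 0 then (X 0 : R4) else 0) C1 = 1 := by
    have h := hF1z _ heq1
    simp only [map_sub, map_mul, aeval_X] at h
    simp only [if_true] at h
    rw [if_neg (by decide : ¬ (2 : ZMod 4) = 0), zero_mul, sub_zero] at h
    have h' : (X 0 : R4) * aeval (fun i : ZMod 4 => if i = 0 then (X 0 : R4) else 0) C1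
        = X 0 * 1 := by rw [mul_one]; exact sub_eq_zero.mp h
    exact mul_left_cancel₀ (MvPolynomial.X_ne_zero 0) h'
  have hF3C1 : aeval (fun i : ZMod 4 => if i = 3 then (X 3 : R4) else 0) C1 = 0 := by
    have h := hF3z _ heq2
    simp only [map_sub, map_mul, aeval_X] at h
    simp only [if_true] at h
    rw [if_neg (by decide : ¬ (1 : ZMod 4) = 3), zero_mul, zero_sub, neg_eq_zero] at h
    rcases mul_eq_zero.mp h with h' | h'
    · exact absurd h' (MvPolynomial.X_ne_zero 3)
    · exact h'
  -- constant coefficients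
  have hcc : ∀ (g : ZMod 4 → R4), (∀ i, constantCoeff (g i) = 0) →
      ∀ r : R4, constantCoeff (aeval g r) = constantCoeff r := by
    intro g hg r
    have hcomp : (constantCoeff : R4 →+* k).comp ((aeval g : R4 →ₐ[k] R4) : R4 →+* R4)
        = (constantCoeff : R4 →+* k) := by
      apply MvPolynomial.ringHom_ext
      · intro a
        simp
      · intro i
        simp [hg i]
    exact RingHom.congr_fun hcomp r
  have hg1cc : ∀ i : ZMod 4,
      constantCoeff ((fun i : ZMod 4 => if i = 0 then (X 0 : R4) else 0) i) = 0 := by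
    intro i
    by_cases h : i = 0 <;> simp [h]
  have hg3cc : ∀ i : ZMod 4,
      constantCoeff ((fun i : ZMod 4 => if i = 3 then (X 3 : R4) else 0) i) = 0 := by
    intro i
    by_cases h : i = 3 <;> simp [h]
  have hone : (1 : k) = 0 := by
    have h1 : constantCoeff C1 = 1 := by
      have := hcc _ hg1cc C1
      rw [hF1C1] at this
      rw [← this, map_one]
    have h3 : constantCoeff C1 = 0 := by
      have := hcc _ hg3cc C1
      rw [hF3C1] at this
      rw [← this, map_zero]
    rw [← h1, h3]
  exact one_ne_zero hone

end C4

/-- For `n ≥ 3`, the cycle `C_n` satisfies `T²(R/I(C_n)) = 0` iff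
`n ≠ 4`: `C_4` is the only cycle with non-vanishing second cotangent cohomology. -/
theorem statement18 {k : Type*} [Field k] (n : ℕ) (hn : 3 ≤ n)
    (hs : Symmetric (fun i j : ZMod n => j = i + 1 ∨ i = j + 1)) :
    T2Vanishes k hs ↔ n ≠ 4 := by
  constructor
  · intro hT hn4
    subst hn4
    exact backward4 hs hT
  · intro h4
    exact forward hs hn h4

end
end
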